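/- arXiv:2506.14240 — 5 statements merged into one kernel-verified Lean document; each statement's English description precedes it below -/
import Mathlib

section
/- In the n-dimensional undirected toroidal mesh C(d_1,...,d_n) with n ≥ 2 and d_i ≥ 3 for all i, any two distinct vertices x and y have at most 2 common neighbors; moreover, if x and y are adjacent, they have at most 1 common neighbor. -/
/-- The `n`-dimensional undirected toroidal mesh `C(d 0, …, d (n-1))`. -/
def torus {n : ℕ} (d : Fin n → ℕ) : SimpleGraph (∀ i, ZMod (d i)) where
  Adj u v := u ≠ v ∧ ∃ j, (u j - v j = 1 ∨ v j - u j = 1) ∧ ∀ i, i ≠ j → u i = v i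
  symm := by
    constructor
    rintro u v ⟨hne, j, hd, he⟩
    exact ⟨hne.symm, j, hd.symm, fun i hi => (he i hi).symm⟩
  loopless := by constructor; rintro u ⟨h, -⟩; exact h rfl

/-- Closed neighborhood of a set of vertices. -/
def closedNbhd {V : Type*} (G : SimpleGraph V) (U : Set V) : Set V :=
  U ∪ {v | ∃ u ∈ U, G.Adj u v}

/-- The survival graph `G ⊖ U`, induced on the complement of `N[U]`. -/
def survival {V : Type*} (G : SimpleGraph V) (U : Set V) :
    SimpleGraph ↥(closedNbhd G U)ᶜ :=
  G.induce (closedNbhd G U)ᶜ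

/-- `U` subverts `G`: the survival graph is disconnected, complete, or empty. -/
def IsNBCut {V : Type*} (G : SimpleGraph V) (U : Set V) : Prop :=
  ¬ (survival G U).Connected ∨
    (∀ a b : ↥(closedNbhd G U)ᶜ, a ≠ b → (survival G U).Adj a b) ∨
    (closedNbhd G U)ᶜ = (∅ : Set V)

/-- Neighbor connectivity `κ_NB`. -/
noncomputable def nbConnectivity {V : Type*} (G : SimpleGraph V) : ℕ :=
  sInf {k | ∃ U : Set V, U.Finite ∧ U.ncard = k ∧ IsNBCut G U}

/-- Vertex connectivity `κ`: the least size of a set whose removal leaves a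
disconnected (or empty) graph or a single vertex. -/
noncomputable def vConnectivity {V : Type*} (G : SimpleGraph V) : ℕ :=
  sInf {k | ∃ U : Set V, U.Finite ∧ U.ncard = k ∧
    (¬ (G.induce Uᶜ).Connected ∨ ∃ v, Uᶜ = ({v} : Set V))}

theorem stmt_2 {n : ℕ} (hn : 2 ≤ n) (d : Fin n → ℕ) (hd : ∀ i, 3 ≤ d i)
    (x y : ∀ i, ZMod (d i)) (hxy : x ≠ y) :
    ((torus d).neighborSet x ∩ (torus d).neighborSet y).ncard ≤ 2 ∧
    ((torus d).Adj x y →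
      ((torus d).neighborSet x ∩ (torus d).neighborSet y).ncard ≤ 1) := by
  classical
  have hone : ∀ i : Fin n, (1 : ZMod (d i)) ≠ 0 := fun i => by
    haveI : Fact (1 < d i) := ⟨by have := hd i; omega⟩
    exact one_ne_zero
  have hsubne : ∀ (i : Fin n) (a b : ZMod (d i)),
      (a - b = 1 ∨ b - a = 1) → a ≠ b := by
    rintro i a b (h | h) rfl <;> simp at h <;> exact hone i h.symm
  obtain ⟨i0, hi0⟩ : ∃ i, x i ≠ y i := by
    by_contra h; push_neg at h; exact hxy (funext h)
  by_cases hB : ∀ i, i ≠ i0 → x i = y i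
  · -- x and y differ only at coordinate i0
    have key : ∀ z ∈ (torus d).neighborSet x ∩ (torus d).neighborSet y,
        z = Function.update x i0 (x i0 + 1) ∨ z = Function.update x i0 (x i0 - 1) := by
      rintro z ⟨⟨hne1, j, hdj, hej⟩, ⟨hne2, k, hdk, hek⟩⟩
      have hji0 : j = i0 := by
        by_contra hji
        have hz0 : x i0 = z i0 := hej i0 (Ne.symm hji)
        have hki0 : k = i0 := by
          by_contra hki
          exact hi0 (hz0.trans (hek i0 (Ne.symm hki)).symm)
        have hjk : j ≠ k := fun e => hji (e.trans hki0)
        have h1 : y j = z j := hek j hjk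
        have h2 : x j = y j := hB j hji
        exact hsubne j (x j) (z j) hdj (h2.trans h1)
      have hz : ∀ i, i ≠ i0 → z i = x i :=
        fun i hi => (hej i (fun e => hi (by rw [e, hji0]))).symm
      have hd0 : x i0 - z i0 = 1 ∨ z i0 - x i0 = 1 := by rw [← hji0]; exact hdj
      rcases hd0 with h | h
      · right
        funext i
        by_cases hi : i = i0
        · subst hi
          rw [Function.update_self]
          have : x i - 1 = z i := by rw [← h]; ring
          exact this.symm
        · rw [Function.update_of_ne hi]; exact hz i hi
      · left
        funext i
        by_cases hi : i = i0
        · subst hi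
          rw [Function.update_self]
          have : x i + 1 = z i := by rw [← h]; ring
          exact this.symm
        · rw [Function.update_of_ne hi]; exact hz i hi
    have hsub : (torus d).neighborSet x ∩ (torus d).neighborSet y ⊆
        {Function.update x i0 (x i0 + 1), Function.update x i0 (x i0 - 1)} := by
      intro z hz; rcases key z hz with h | h
      · exact Or.inl h
      · exact Or.inr h
    constructor
    · calc ((torus d).neighborSet x ∩ (torus d).neighborSet y).ncard
          ≤ ({Function.update x i0 (x i0 + 1), Function.update x i0 (x i0 - 1)} :
              Set (∀ i, ZMod (d i))).ncard := Set.ncard_le_ncard hsub (Set.toFinite _)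
        _ ≤ ({Function.update x i0 (x i0 - 1)} :
              Set (∀ i, ZMod (d i))).ncard + 1 := Set.ncard_insert_le _ _
        _ ≤ 2 := by rw [Set.ncard_singleton]
    · rintro ⟨-, j', hdj', hej'⟩
      have hj'i0 : j' = i0 := by
        by_contra hj'
        exact hi0 (hej' i0 (Ne.symm hj'))
      have hd0' : x i0 - y i0 = 1 ∨ y i0 - x i0 = 1 := by rw [← hj'i0]; exact hdj'
      rcases hd0' with h | h
      · -- x i0 - y i0 = 1, so y = update x i0 (x i0 - 1); exclude the minus candidate
        have hsub1 : (torus d).neighborSet x ∩ (torus d).neighborSet y ⊆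
            {Function.update x i0 (x i0 + 1)} := by
          intro z hz
          rcases key z hz with hcase | hcase
          · exact hcase
          · exfalso
            obtain ⟨⟨-, -⟩, ⟨hne2, -⟩⟩ := hz
            apply hne2
            funext i
            by_cases hi : i = i0
            · subst hi
              rw [hcase, Function.update_self]
              rw [← h]; ring
            · rw [hcase, Function.update_of_ne hi]; exact (hB i hi).symm
        calc ((torus d).neighborSet x ∩ (torus d).neighborSet y).ncard
            ≤ ({Function.update x i0 (x i0 + 1)} :
                Set (∀ i, ZMod (d i))).ncard := Set.ncard_le_ncard hsub1 (Set.toFinite _)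
          _ ≤ 1 := by rw [Set.ncard_singleton]
      · -- y i0 - x i0 = 1, so y = update x i0 (x i0 + 1); exclude the plus candidate
        have hsub1 : (torus d).neighborSet x ∩ (torus d).neighborSet y ⊆
            {Function.update x i0 (x i0 - 1)} := by
          intro z hz
          rcases key z hz with hcase | hcase
          · exfalso
            obtain ⟨⟨-, -⟩, ⟨hne2, -⟩⟩ := hz
            apply hne2
            funext i
            by_cases hi : i = i0
            · subst hi
              rw [hcase, Function.update_self]
              rw [← h]; ring
            · rw [hcase, Function.update_of_ne hi]; exact (hB i hi).symm
          · exact hcase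
        calc ((torus d).neighborSet x ∩ (torus d).neighborSet y).ncard
            ≤ ({Function.update x i0 (x i0 - 1)} :
                Set (∀ i, ZMod (d i))).ncard := Set.ncard_le_ncard hsub1 (Set.toFinite _)
          _ ≤ 1 := by rw [Set.ncard_singleton]
  · -- x and y differ at (at least) two coordinates i0 and i1
    push_neg at hB
    obtain ⟨i1, hi1ne, hi1⟩ := hB
    have key : ∀ z ∈ (torus d).neighborSet x ∩ (torus d).neighborSet y,
        z = Function.update x i0 (y i0) ∨ z = Function.update x i1 (y i1) := by
      rintro z ⟨⟨hne1, j, hdj, hej⟩, ⟨hne2, k, hdk, hek⟩⟩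
      have hz : ∀ i, i ≠ j → z i = x i := fun i hi => (hej i hi).symm
      have hzy : ∀ i, i ≠ k → z i = y i := fun i hi => (hek i hi).symm
      have hji : j = i0 ∨ j = i1 := by
        by_contra hcon
        push_neg at hcon
        obtain ⟨hji0, hji1⟩ := hcon
        have hk0 : k = i0 := by
          by_contra hk
          exact hi0 (((hz i0 (fun e => hji0 e.symm)).symm.trans
            (hzy i0 (fun e => hk e.symm))))
        have hk1 : k = i1 := by
          by_contra hk
          exact hi1 (((hz i1 (fun e => hji1 e.symm)).symm.trans
            (hzy i1 (fun e => hk e.symm))))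
        exact hi1ne (hk1.symm.trans hk0)
      rcases hji with hj | hj
      · -- j = i0
        have hk1 : k = i1 := by
          by_contra hk
          exact hi1 ((hz i1 (fun e => hi1ne (e.trans hj))).symm.trans
            (hzy i1 (fun e => hk e.symm)))
        left
        funext i
        by_cases hi : i = i0
        · subst hi
          rw [Function.update_self]
          exact hzy i (fun e => hi1ne ((e.trans hk1).symm))
        · rw [Function.update_of_ne hi]
          exact hz i (fun e => hi (e.trans hj))
      · -- j = i1
        have hk0 : k = i0 := by
          by_contra hk
          exact hi0 ((hz i0 (fun e => hi1ne ((e.trans hj).symm))).symm.trans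
            (hzy i0 (fun e => hk e.symm)))
        right
        funext i
        by_cases hi : i = i1
        · subst hi
          rw [Function.update_self]
          exact hzy i (fun e => hi1ne (e.trans hk0))
        · rw [Function.update_of_ne hi]
          exact hz i (fun e => hi (e.trans hj))
    have hsub : (torus d).neighborSet x ∩ (torus d).neighborSet y ⊆
        {Function.update x i0 (y i0), Function.update x i1 (y i1)} := by
      intro z hz; rcases key z hz with h | h
      · exact Or.inl h
      · exact Or.inr h
    constructor
    · calc ((torus d).neighborSet x ∩ (torus d).neighborSet y).ncard
          ≤ ({Function.update x i0 (y i0), Function.update x i1 (y i1)} :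
              Set (∀ i, ZMod (d i))).ncard := Set.ncard_le_ncard hsub (Set.toFinite _)
        _ ≤ ({Function.update x i1 (y i1)} :
              Set (∀ i, ZMod (d i))).ncard + 1 := Set.ncard_insert_le _ _
        _ ≤ 2 := by rw [Set.ncard_singleton]
    · rintro ⟨-, j', hdj', hej'⟩
      exfalso
      have h0 : j' = i0 := by
        by_contra hj'; exact hi0 (hej' i0 (Ne.symm hj'))
      have h1 : j' = i1 := by
        by_contra hj'; exact hi1 (hej' i1 (Ne.symm hj'))
      exact hi1ne (h1.symm.trans h0)
end

section
/- Let C = C(d_1,...,d_n) with n ≥ 3 and d_i ≥ 3 for all i, partitioned along dimension c, let U ⊆ V(C) with |U| = ℓ < n, and let C[i], C[j] be adjacent subnetworks with μ_i = |U ∩ V(C[i])| and μ_j = |U ∩ V(C[j])|. Then the number of vertices v ∈ V(C[i]) such that both v and its outer neighbor v^j in C[j] are not in N[U] is strictly greater than h = 2n − 2 − ℓ − μ_i − μ_j. -/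
open Function


lemma torus_adj {n : ℕ} {d : Fin n → ℕ} {u v : ∀ k, ZMod (d k)} :
    (torus d).Adj u v ↔ u ≠ v ∧ ∃ k, (u k - v k = 1 ∨ v k - u k = 1) ∧
      ∀ m, m ≠ k → u m = v m := Iff.rfl

lemma zmod_shift {m : ℕ} {a b : ZMod m} (h : a - b = 1 ∨ b - a = 1) :
    b = a + 1 ∨ b = a - 1 := by
  rcases h with h | h
  · right; linear_combination -h
  · left; linear_combination h

def crossF {n : ℕ} (d : Fin n → ℕ) (c : Fin n) (w : ∀ k, ZMod (d k)) :
    Finset (∀ k, ZMod (d k)) :=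
  insert w ((Finset.univ.erase c).biUnion fun k =>
    {Function.update w k (w k + 1), Function.update w k (w k - 1)})

lemma mem_crossF_arm {n : ℕ} {d : Fin n → ℕ} {c : Fin n} (w : ∀ k, ZMod (d k))
    {k : Fin n} (hk : k ≠ c) {x : ZMod (d k)} (hx : x = w k + 1 ∨ x = w k - 1) :
    Function.update w k x ∈ crossF d c w := by
  refine Finset.mem_insert_of_mem (Finset.mem_biUnion.2 ⟨k, Finset.mem_erase.2 ⟨hk, Finset.mem_univ k⟩, ?_⟩)
  rcases hx with rfl | rfl
  · exact Finset.mem_insert_self _ _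
  · exact Finset.mem_insert_of_mem (Finset.mem_singleton_self _)

lemma mem_crossF_of_block {n : ℕ} {d : Fin n → ℕ} {c : Fin n} {i j : ZMod (d c)}
    (hij : i ≠ j) {u v : ∀ k, ZMod (d k)} (hv : v c = i)
    (h : v = u ∨ (torus d).Adj u v ∨ Function.update v c j = u ∨
      (torus d).Adj u (Function.update v c j)) :
    v ∈ crossF d c (Function.update u c i) ∧
      (¬ (u c = i ∨ u c = j) → v = Function.update u c i) := by
  classical
  have hagree : (∀ m, m ≠ c → u m = v m) → v = Function.update u c i := by
    intro hall
    funext m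
    by_cases hm : m = c
    · subst hm; rw [Function.update_self, hv]
    · rw [Function.update_of_ne hm, (hall m hm)]
  have hself : v = Function.update u c i → v ∈ crossF d c (Function.update u c i) :=
    fun hh => hh ▸ Finset.mem_insert_self _ _
  rcases h with heq | hadj | hvj | hadj
  · -- v = u
    have huc : u c = i := by rw [← heq]; exact hv
    have : v = Function.update u c i := hagree fun m _ => (congrFun heq m).symm
    exact ⟨hself this, fun hne => absurd (Or.inl huc) hne⟩
  · obtain ⟨hne, k, hk, hall⟩ := hadj
    by_cases hkc : k = c
    · have : v = Function.update u c i :=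
        hagree fun m hm => hall m (fun hh => hm (hh.trans hkc))
      exact ⟨hself this, fun _ => this⟩
    · have huc : u c = i := (hall c (fun hh => hkc hh.symm)).trans hv
      have hw : Function.update u c i = u := by rw [← huc, Function.update_eq_self]
      have hvk : v = Function.update u k (v k) := by
        funext m
        by_cases hm : m = k
        · subst hm; rw [Function.update_self]
        · rw [Function.update_of_ne hm, hall m hm]
      have hmem : v ∈ crossF d c u := by
        rw [hvk]
        exact mem_crossF_arm u hkc (zmod_shift hk)
      refine ⟨by rw [hw]; exact hmem, fun hne => absurd (Or.inl huc) hne⟩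
  · -- update v c j = u
    have huc : u c = j := by rw [← hvj, Function.update_self]
    have : v = Function.update u c i := by
      apply hagree
      intro m hm
      rw [← hvj, Function.update_of_ne hm]
    exact ⟨hself this, fun _ => this⟩
  · obtain ⟨hne, k, hk, hall⟩ := hadj
    by_cases hkc : k = c
    · have : v = Function.update u c i := by
        apply hagree
        intro m hm
        rw [hall m (fun hh => hm (hh.trans hkc)), Function.update_of_ne hm]
      exact ⟨hself this, fun _ => this⟩
    · have huc : u c = j := by
        rw [hall c (fun hh => hkc hh.symm), Function.update_self]
      have hvjk : Function.update v c j k = u k + 1 ∨ Function.update v c j k = u k - 1 :=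
        zmod_shift hk
      rw [Function.update_of_ne hkc] at hvjk
      have hwk : Function.update u c i k = u k := Function.update_of_ne hkc _ _
      have hvk : v = Function.update (Function.update u c i) k (v k) := by
        funext m
        by_cases hm : m = k
        · subst hm; rw [Function.update_self]
        · by_cases hmc : m = c
          · subst hmc
            rw [Function.update_of_ne hm, Function.update_self, hv]
          · rw [Function.update_of_ne hm, Function.update_of_ne hmc,
              hall m hm, Function.update_of_ne hmc]
      refine ⟨?_, fun hne => absurd (Or.inr huc) hne⟩
      rw [hvk]
      exact mem_crossF_arm _ hkc (by rw [hwk]; exact hvjk)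
lemma crossF_card {n : ℕ} (d : Fin n → ℕ) (c : Fin n) (w : ∀ k, ZMod (d k)) :
    (crossF d c w).card ≤ 1 + 2 * (n - 1) := by
  classical
  refine (Finset.card_insert_le _ _).trans ?_
  have h1 : ((Finset.univ.erase c).biUnion fun k =>
      ({Function.update w k (w k + 1), Function.update w k (w k - 1)} : Finset _)).card
      ≤ ∑ _k ∈ Finset.univ.erase c, 2 :=
    Finset.card_biUnion_le.trans (Finset.sum_le_sum fun k _ =>
      (Finset.card_insert_le _ _).trans (by simp))
  have h2 : (Finset.univ.erase c).card = n - 1 := by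
    rw [Finset.card_erase_of_mem (Finset.mem_univ c), Finset.card_univ, Fintype.card_fin]
  rw [Finset.sum_const, smul_eq_mul, h2] at h1
  omega
lemma pow_key : ∀ n : ℕ, 4 ≤ n → 2*n*n + 1 ≤ 3^(n-1) + 2*n := by
  intro n hn
  induction n with
  | zero => omega
  | succ m ih =>
    rcases Nat.lt_or_ge m 4 with h | h
    · interval_cases m <;> simp_all <;> omega
    · have := ih (by omega)
      have hm : m - 1 + 1 = m := by omega
      have h3 : (3:ℕ)^(m+1-1) = 3 * 3^(m-1) := by
        conv_lhs => rw [Nat.add_sub_cancel, ← hm]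
        rw [pow_succ, mul_comm]
      rw [h3]
      nlinarith


lemma final_arith (n ℓ B x fi fj a b P : ℕ) (hn : 3 ≤ n) (hℓn : ℓ < n)
    (hP : 3 ^ (n - 1) ≤ P) (hPs : P = B + x) (hBad : B ≤ a * (1 + 2 * (n - 1)) + b)
    (hsplit : a = fi + fj) (hab : a + b = ℓ)
    (hspec : n = 3 → a = 2 → 1 ≤ x) :
    x > 2 * n - 2 - ℓ - fi - fj := by
  subst hPs
  by_cases hsp : n = 3 ∧ a = 2
  · have hx := hspec hsp.1 hsp.2
    obtain ⟨hn3, ha2⟩ := hsp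
    omega
  · rcases Nat.lt_or_ge n 4 with h4 | h4
    · have hn3 : n = 3 := by omega
      have h9 : (3:ℕ) ^ (n - 1) = 9 := by rw [hn3]; norm_num
      have hmul : 1 + 2 * (n - 1) = 5 := by omega
      rw [h9] at hP
      rw [hmul] at hBad
      have hane : ¬(n = 3 ∧ a = 2) := hsp
      omega
    · obtain ⟨m, rfl⟩ : ∃ m, n = m + 4 := ⟨n - 4, by omega⟩
      have e1 : m + 4 - 1 = m + 3 := by omega
      rw [e1] at hP
      have hBad2 : B ≤ a * (2 * m + 7) + b := by
        have e2 : 1 + 2 * (m + 4 - 1) = 2 * m + 7 := by omega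
        rw [e2] at hBad; exact hBad
      have hp := pow_key (m + 4) (by omega)
      rw [e1] at hp
      have hub : a ≤ m + 3 := by omega
      have hvb : b ≤ m + 3 := by omega
      have hprod : a * (2 * m + 7) ≤ (m + 3) * (2 * m + 7) :=
        Nat.mul_le_mul_right _ hub
      have hprod2 : a * (2 * m + 5) ≤ (m + 3) * (2 * m + 5) :=
        Nat.mul_le_mul_right _ hub
      have hk1 : 1 ≤ x := by nlinarith [hP, hBad2, hp, hprod, hub, hvb]
      have hk2 : 2 * (m + 4) ≤ x + 2 * a + b + 1 := by
        nlinarith [hP, hBad2, hp, hprod2, hub, hvb]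
      omega

lemma exists_good {n : ℕ} {d : Fin n → ℕ} (hn : 3 ≤ n) (hd : ∀ k, 3 ≤ d k) (c : Fin n)
    (i j : ZMod (d c)) (u1 u2 : ∀ k, ZMod (d k)) :
    ∃ v : ∀ k, ZMod (d k), v c = i ∧
      v ∉ closedNbhd (torus d) {u1, u2} ∧
      Function.update v c j ∉ closedNbhd (torus d) {u1, u2} := by
  classical
  haveI : ∀ k, NeZero (d k) := fun k => ⟨by have := hd k; omega⟩
  have hpick : ∀ k, ∃ x : ZMod (d k), x ≠ u1 k ∧ x ≠ u2 k := by
    intro k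
    by_contra h
    push_neg at h
    have hsub : (Finset.univ : Finset (ZMod (d k))) ⊆ {u1 k, u2 k} := by
      intro x _
      by_cases hx : x = u1 k
      · simp [hx]
      · simp [h x hx]
    have hle := Finset.card_le_card hsub
    have h2 : ({u1 k, u2 k} : Finset (ZMod (d k))).card ≤ 2 :=
      (Finset.card_insert_le _ _).trans (by simp)
    rw [Finset.card_univ, ZMod.card] at hle
    have := hd k
    omega
  choose f hf1 hf2 using hpick
  have hcard : 1 < (Finset.univ.erase c : Finset (Fin n)).card := by
    rw [Finset.card_erase_of_mem (Finset.mem_univ c), Finset.card_univ, Fintype.card_fin]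
    omega
  obtain ⟨k1, hk1, k2, hk2, hkk⟩ := Finset.one_lt_card.mp hcard
  have hk1c : k1 ≠ c := (Finset.mem_erase.mp hk1).1
  have hk2c : k2 ≠ c := (Finset.mem_erase.mp hk2).1
  have hnot : ∀ x : ∀ k, ZMod (d k), (∀ m, m ≠ c → x m = f m) →
      x ∉ closedNbhd (torus d) {u1, u2} := by
    intro x hx hmem
    have hxf : ∀ u, (u = u1 ∨ u = u2) → ∀ m, m ≠ c → x m ≠ u m := by
      rintro u (rfl | rfl) m hm <;> rw [hx m hm]
      · exact hf1 m
      · exact hf2 m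
    simp only [closedNbhd, Set.mem_union, Set.mem_setOf_eq, Set.mem_insert_iff,
      Set.mem_singleton_iff] at hmem
    rcases hmem with hm | ⟨u, huU, hadj⟩
    · rcases hm with hm | hm
      · exact hxf u1 (Or.inl rfl) k1 hk1c (by rw [hm])
      · exact hxf u2 (Or.inr rfl) k1 hk1c (by rw [hm])
    · obtain ⟨hne, k, hk, hall⟩ := hadj
      have h12 : k1 ≠ k ∨ k2 ≠ k := by
        by_contra hcon
        push_neg at hcon
        exact hkk (hcon.1.trans hcon.2.symm)
      rcases h12 with hm | hm
      · exact hxf u huU k1 hk1c ((hall k1 hm).symm)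
      · exact hxf u huU k2 hk2c ((hall k2 hm).symm)
  refine ⟨Function.update f c i, Function.update_self _ _ _, ?_, ?_⟩
  · exact hnot _ (fun m hm => Function.update_of_ne hm _ _)
  · refine hnot _ (fun m hm => ?_)
    rw [Function.update_of_ne hm, Function.update_of_ne hm]

theorem stmt_6 {n : ℕ} (hn : 3 ≤ n) (d : Fin n → ℕ) (hd : ∀ i, 3 ≤ d i)
    (c : Fin n) (U : Set (∀ i, ZMod (d i))) (hU : U.Finite) (ℓ : ℕ)
    (hℓ : U.ncard = ℓ) (hℓn : ℓ < n)
    (i j : ZMod (d c)) (hij : j = i + 1 ∨ j = i - 1) :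
    {v : ∀ i, ZMod (d i) | v c = i ∧ v ∉ closedNbhd (torus d) U ∧
        Function.update v c j ∉ closedNbhd (torus d) U}.ncard >
      2 * n - 2 - ℓ - (U ∩ {v | v c = i}).ncard - (U ∩ {v | v c = j}).ncard := by
  classical
  haveI hnz : ∀ k, NeZero (d k) := fun k => ⟨by have := hd k; omega⟩
  have hij' : i ≠ j := by
    haveI : Fact (1 < d c) := ⟨by have := hd c; omega⟩
    have h1 : (1 : ZMod (d c)) ≠ 0 := one_ne_zero
    rcases hij with rfl | rfl
    · intro h; exact h1 (by linear_combination -h)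
    · intro h; exact h1 (by linear_combination h)
  set SF : Finset (∀ k, ZMod (d k)) := Finset.univ.filter
    (fun v => v c = i ∧ v ∉ closedNbhd (torus d) U ∧
      Function.update v c j ∉ closedNbhd (torus d) U) with hSF
  set LF : Finset (∀ k, ZMod (d k)) := Finset.univ.filter (fun v => v c = i) with hLF
  set UF : Finset (∀ k, ZMod (d k)) := hU.toFinset with hUF
  set U1 : Finset (∀ k, ZMod (d k)) := UF.filter (fun u => u c = i ∨ u c = j) with hU1
  set U2 : Finset (∀ k, ZMod (d k)) := UF.filter (fun u => ¬ (u c = i ∨ u c = j)) with hU2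
  have hScard : {v : ∀ k, ZMod (d k) | v c = i ∧ v ∉ closedNbhd (torus d) U ∧
      Function.update v c j ∉ closedNbhd (torus d) U}.ncard = SF.card := by
    rw [← Set.ncard_coe_finset]
    congr 1
    ext v
    simp [hSF]
  have hUFcard : UF.card = ℓ := by
    rw [hUF, ← Set.ncard_eq_toFinset_card U hU, hℓ]
  have hμi : (U ∩ {v | v c = i}).ncard = (UF.filter (fun u => u c = i)).card := by
    rw [← Set.ncard_coe_finset]
    congr 1
    ext u
    simp [hUF, Set.Finite.mem_toFinset]
  have hμj : (U ∩ {v | v c = j}).ncard = (UF.filter (fun u => u c = j)).card := by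
    rw [← Set.ncard_coe_finset]
    congr 1
    ext u
    simp [hUF, Set.Finite.mem_toFinset]
  have hU1split : U1.card = (UF.filter (fun u => u c = i)).card +
      (UF.filter (fun u => u c = j)).card := by
    rw [hU1, Finset.filter_or]
    rw [Finset.card_union_of_disjoint]
    simp only [Finset.disjoint_left, Finset.mem_filter]
    rintro a ⟨-, h1⟩ ⟨-, h2⟩
    exact hij' (h1 ▸ h2 ▸ rfl)
  have hU12 : U1.card + U2.card = ℓ := by
    rw [hU1, hU2, Finset.card_filter_add_card_filter_not, hUFcard]
  have hSL : SF ⊆ LF := by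
    intro v hv
    simp only [hSF, hLF, Finset.mem_filter] at hv ⊢
    exact ⟨hv.1, hv.2.1⟩
  -- bad set inclusion
  have hBad : LF \ SF ⊆ U1.biUnion (fun u => crossF d c (Function.update u c i)) ∪
      U2.image (fun u => Function.update u c i) := by
    intro v hv
    simp only [Finset.mem_sdiff, hSF, hLF, Finset.mem_filter, Finset.mem_univ,
      true_and, not_and, not_not] at hv
    obtain ⟨hvc, hbad⟩ := hv
    have hmem : v ∈ closedNbhd (torus d) U ∨
        Function.update v c j ∈ closedNbhd (torus d) U := by
      by_contra hcon
      push_neg at hcon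
      exact hcon.2 (hbad hvc hcon.1)
    have hex : ∃ u ∈ U, v = u ∨ (torus d).Adj u v ∨ Function.update v c j = u ∨
        (torus d).Adj u (Function.update v c j) := by
      rcases hmem with hm | hm <;>
        rcases hm with hm | ⟨u, huU, hadj⟩
      · exact ⟨v, hm, Or.inl rfl⟩
      · exact ⟨u, huU, Or.inr (Or.inl hadj)⟩
      · exact ⟨Function.update v c j, hm, Or.inr (Or.inr (Or.inl rfl))⟩
      · exact ⟨u, huU, Or.inr (Or.inr (Or.inr hadj))⟩
    obtain ⟨u, huU, hdisj⟩ := hex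
    obtain ⟨hcross, hrefine⟩ := mem_crossF_of_block hij' hvc hdisj
    by_cases hu : u c = i ∨ u c = j
    · refine Finset.mem_union_left _ (Finset.mem_biUnion.2 ⟨u, ?_, hcross⟩)
      rw [hU1, Finset.mem_filter]
      exact ⟨(Set.Finite.mem_toFinset hU).2 huU, hu⟩
    · refine Finset.mem_union_right _ (Finset.mem_image.2 ⟨u, ?_, (hrefine hu).symm⟩)
      rw [hU2, Finset.mem_filter]
      exact ⟨(Set.Finite.mem_toFinset hU).2 huU, hu⟩
  have hBadcard : (LF \ SF).card ≤ U1.card * (1 + 2 * (n - 1)) + U2.card := by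
    calc (LF \ SF).card ≤ _ := Finset.card_le_card hBad
      _ ≤ (U1.biUnion (fun u => crossF d c (Function.update u c i))).card +
          (U2.image (fun u => Function.update u c i)).card := Finset.card_union_le _ _
      _ ≤ (∑ u ∈ U1, (crossF d c (Function.update u c i)).card) + U2.card :=
          add_le_add Finset.card_biUnion_le Finset.card_image_le
      _ ≤ (∑ _u ∈ U1, (1 + 2 * (n - 1))) + U2.card :=
          add_le_add_left (Finset.sum_le_sum fun u _ => crossF_card d c _) _
      _ = U1.card * (1 + 2 * (n - 1)) + U2.card := by
          rw [Finset.sum_const, smul_eq_mul]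
  have hLsplit : LF.card = (LF \ SF).card + SF.card :=
    (Finset.card_sdiff_add_card_eq_card hSL).symm
  -- lower bound on LF.card
  have hLcard : 3 ^ (n - 1) ≤ LF.card := by
    have hinj : Function.Injective (fun f : ∀ k : {k : Fin n // k ≠ c}, ZMod (d k.1) =>
        (Equiv.piSplitAt c (fun k => ZMod (d k))).symm (i, f)) := by
      intro f1 f2 hf
      have h2 := (Equiv.piSplitAt c (fun k => ZMod (d k))).symm.injective hf
      exact congrArg Prod.snd h2
    have hmem : ∀ f : ∀ k : {k : Fin n // k ≠ c}, ZMod (d k.1),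
        (Equiv.piSplitAt c (fun k => ZMod (d k))).symm (i, f) ∈ LF := by
      intro f
      rw [hLF, Finset.mem_filter]
      exact ⟨Finset.mem_univ _, by simp⟩
    have hcard1 : Fintype.card (∀ k : {k : Fin n // k ≠ c}, ZMod (d k.1)) ≤ LF.card := by
      rw [← Finset.card_univ]
      exact Finset.card_le_card_of_injOn _ (fun f _ => hmem f) hinj.injOn
    refine le_trans ?_ hcard1
    rw [Fintype.card_pi]
    have hsub : Fintype.card {k : Fin n // k ≠ c} = n - 1 := by
      simp [Ne, Fintype.card_subtype_compl, Fintype.card_subtype_eq, Fintype.card_fin]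
    calc (3:ℕ) ^ (n - 1) = ∏ _k : {k : Fin n // k ≠ c}, 3 := by
          rw [Finset.prod_const, Finset.card_univ, hsub]
      _ ≤ ∏ k : {k : Fin n // k ≠ c}, Fintype.card (ZMod (d k.1)) :=
          Finset.prod_le_prod' (fun k _ => by rw [ZMod.card]; exact hd k.1)
  have hpos : n = 3 → U1.card = 2 → 1 ≤ SF.card := by
    intro hn3 ha2
    have hℓ2 : U.ncard = 2 := by
      rw [hℓ]
      have h2 : 2 ≤ ℓ := by rw [← hU12, ha2]; exact Nat.le_add_right _ _
      have h3 : ℓ < 3 := by rw [← hn3]; exact hℓn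
      exact Nat.le_antisymm (Nat.lt_succ_iff.mp h3) h2
    obtain ⟨u1, u2, -, hUeq⟩ := Set.ncard_eq_two.mp hℓ2
    obtain ⟨v, hv1, hv2, hv3⟩ := exists_good hn hd c i j u1 u2
    rw [← hUeq] at hv2 hv3
    refine Nat.one_le_iff_ne_zero.mpr (Finset.card_ne_zero_of_mem (a := v) ?_)
    rw [hSF]
    simp only [Finset.mem_filter, Finset.mem_univ, true_and]
    exact ⟨hv1, hv2, hv3⟩
  rw [hScard, hμi, hμj]
  exact final_arith n ℓ _ _ _ _ U1.card U2.card LF.card hn hℓn hLcard hLsplit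
    hBadcard hU1split hU12 hpos
end

section
/- Let C = C(d_1,...,d_n) with n ≥ 2, d_i ≥ 3 for all i, and (n, d_1,...,d_n) ≠ (2,3,3). Then there exists a set U of n vertices such that the vertex v = (0,...,0) is isolated in the survival graph C ⊖ U while C ⊖ U has at least two vertices; hence κ_NB(C) ≤ n. -/
/-! ### Auxiliary lemmas -/

lemma zaux_ne {m k : ℕ} (hk : 0 < k) (hmk : k < m) : ((k : ZMod m)) ≠ 0 := by
  intro h
  have hdvd : m ∣ k := (CharP.cast_eq_zero_iff (ZMod m) m k).mp h
  exact absurd (Nat.le_of_dvd hk hdvd) (by omega)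

lemma z1 {m : ℕ} (hm : 3 ≤ m) : (1 : ZMod m) ≠ 0 := by
  have := zaux_ne (m := m) (k := 1) one_pos (by omega); simpa using this

lemma z2 {m : ℕ} (hm : 3 ≤ m) : (2 : ZMod m) ≠ 0 := by
  have := zaux_ne (m := m) (k := 2) (by norm_num) (by omega); simpa using this

lemma z3 {m : ℕ} (hm : 4 ≤ m) : (3 : ZMod m) ≠ 0 := by
  have := zaux_ne (m := m) (k := 3) (by norm_num) (by omega); simpa using this

lemma zneg1 {m : ℕ} (hm : 3 ≤ m) : (-1 : ZMod m) ≠ 0 := fun h => z1 hm (neg_eq_zero.mp h)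

lemma z1neg1 {m : ℕ} (hm : 3 ≤ m) : (1 : ZMod m) ≠ -1 := by
  intro h; apply z2 hm; linear_combination h

lemma z2ne1 {m : ℕ} (hm : 3 ≤ m) : (2 : ZMod m) ≠ 1 := by
  intro h; apply z1 hm; linear_combination h

lemma z2neg1 {m : ℕ} (hm : 4 ≤ m) : (2 : ZMod m) ≠ -1 := by
  intro h; apply z3 hm; linear_combination h

lemma fin_add_one_ne {n : ℕ} [NeZero n] (hn : 2 ≤ n) (k : Fin n) : k + 1 ≠ k := by
  intro h
  have h' := congrArg Fin.val h
  have h1 : (1 : Fin n).val = 1 := by rw [Fin.val_one']; exact Nat.mod_eq_of_lt (by omega)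
  rw [Fin.add_def, h1] at h'
  simp only [Fin.val_mk] at h'
  have hk := k.isLt
  rcases Nat.lt_or_ge (k.val + 1) n with h2 | h2
  · rw [Nat.mod_eq_of_lt h2] at h'; omega
  · have h3 : k.val + 1 = n := by omega
    rw [h3, Nat.mod_self] at h'; omega

lemma fin_sub_add {n : ℕ} [NeZero n] (k : Fin n) : (k - 1) + 1 = k :=
  sub_add_cancel k 1

lemma fin_sub_one_ne {n : ℕ} [NeZero n] (hn : 2 ≤ n) (k : Fin n) : k - 1 ≠ k := by
  intro h
  have h2 := fin_sub_add (n := n) k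
  rw [h] at h2
  exact fin_add_one_ne hn k h2

/-! ### The witnessing vertices -/

section Witness

variable {n : ℕ} [NeZero n] (d : Fin n → ℕ)

/-- The `k`-th witnessing vertex: `e_k - e_{k+1}`. -/
def uvec (k : Fin n) (i : Fin n) : ZMod (d i) :=
  if i = k then 1 else if i = k + 1 then -1 else 0

variable {d}

lemma uvec_self (k : Fin n) : uvec d k k = 1 := if_pos rfl

lemma uvec_succ (hn : 2 ≤ n) (k : Fin n) : uvec d k (k + 1) = -1 := by
  rw [uvec, if_neg (fin_add_one_ne hn k), if_pos rfl]

lemma uvec_other {k i : Fin n} (h1 : i ≠ k) (h2 : i ≠ k + 1) : uvec d k i = 0 := by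
  rw [uvec, if_neg h1, if_neg h2]

lemma adj_zero_mem (hn : 2 ≤ n) (hd : ∀ i, 3 ≤ d i) {w : ∀ i, ZMod (d i)}
    (h : (torus d).Adj (fun _ => 0) w) :
    w ∈ closedNbhd (torus d) (Set.range fun k => (uvec d k : ∀ i, ZMod (d i))) := by
  obtain ⟨-, j, hdiff, heq⟩ := h
  have hw0 : ∀ i, i ≠ j → w i = 0 := fun i hi => (heq i hi).symm
  refine Or.inr ?_
  rcases hdiff with h1 | h1
  · -- w j = -1 ; use uvec (j-1)
    have hwj : w j = -1 := by
      have h2 : (0 : ZMod (d j)) - w j = 1 := h1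
      linear_combination -h2
    refine ⟨uvec d (j - 1), ⟨j - 1, rfl⟩, ?_, j - 1, ?_, ?_⟩
    · intro he
      have h3 := congrFun he (j - 1)
      rw [uvec_self, hw0 _ (fin_sub_one_ne hn j)] at h3
      exact z1 (hd _) h3
    · left
      rw [uvec_self, hw0 _ (fin_sub_one_ne hn j), sub_zero]
    · intro i hi
      by_cases hij : i = j
      · subst hij
        have h4 := uvec_succ (d := d) hn (i - 1)
        rw [fin_sub_add] at h4
        rw [h4, hwj]
      · rw [uvec_other hi (by rw [fin_sub_add]; exact hij), hw0 i hij]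
  · -- w j = 1 ; use uvec j
    have hwj : w j = 1 := by
      have h2 : w j - (0 : ZMod (d j)) = 1 := h1
      linear_combination h2
    refine ⟨uvec d j, ⟨j, rfl⟩, ?_, j + 1, ?_, ?_⟩
    · intro he
      have h3 := congrFun he (j + 1)
      rw [uvec_succ hn, hw0 _ (fin_add_one_ne hn j)] at h3
      exact zneg1 (hd _) h3
    · right
      rw [uvec_succ hn, hw0 _ (fin_add_one_ne hn j)]
      ring
    · intro i hi
      by_cases hij : i = j
      · subst hij; rw [uvec_self, hwj]
      · rw [uvec_other hij hi, hw0 i hij]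

lemma zero_not_mem (hn : 2 ≤ n) (hd : ∀ i, 3 ≤ d i) :
    (fun _ => 0) ∈ (closedNbhd (torus d) (Set.range fun k => (uvec d k : ∀ i, ZMod (d i))))ᶜ := by
  intro hmem
  rcases hmem with ⟨k, hk⟩ | ⟨v, ⟨k, rfl⟩, hadj⟩
  · have h3 := congrFun hk k
    simp only [uvec_self] at h3
    exact z1 (hd k) h3
  · obtain ⟨-, m, -, heq⟩ := hadj
    rcases ne_or_eq k m with h1 | h1
    · have h3 := heq k h1
      simp only [uvec_self] at h3
      exact z1 (hd k) h3
    · have h2 : k + 1 ≠ m := h1 ▸ fin_add_one_ne hn k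
      have h3 := heq _ h2
      simp only [uvec_succ hn] at h3
      exact zneg1 (hd _) h3

lemma uvec_inj (hn : 2 ≤ n) (hd : ∀ i, 3 ≤ d i) :
    Function.Injective (fun k => (uvec d k : ∀ i, ZMod (d i))) := by
  intro k k' h
  by_contra hne
  have h3 := congrFun h k
  simp only [uvec_self] at h3
  by_cases h2 : k = k' + 1
  · rw [show uvec d k' k = -1 by rw [uvec, if_neg hne, if_pos h2]] at h3
    exact z1neg1 (hd k) h3
  · rw [uvec_other hne h2] at h3
    exact z1 (hd k) h3

end Witness

section Witness2

variable {n : ℕ} [NeZero n] {d : Fin n → ℕ}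

/-- Case A: some `d j ≥ 4`; the vertex `2·e_j` survives. -/
lemma wA_not_mem (hn : 2 ≤ n) (hd : ∀ i, 3 ≤ d i) {j : Fin n} (hj : 4 ≤ d j) :
    (fun i => if i = j then (2 : ZMod (d i)) else 0) ∈
      (closedNbhd (torus d) (Set.range fun k => (uvec d k : ∀ i, ZMod (d i))))ᶜ := by
  set w : ∀ i, ZMod (d i) := fun i => if i = j then (2 : ZMod (d i)) else 0 with hw
  have hwne1 : ∀ k : Fin n, w k ≠ 1 := by
    intro k
    simp only [hw]
    by_cases hkj : k = j
    · rw [if_pos hkj]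
      subst hkj
      exact z2ne1 (hd k)
    · rw [if_neg hkj]
      exact fun h => z1 (hd k) h.symm
  intro hmem
  rcases hmem with ⟨k, hk⟩ | ⟨v, ⟨k, rfl⟩, hadj⟩
  · have h3 := congrFun hk k
    simp only [uvec_self] at h3
    exact hwne1 k h3.symm
  · obtain ⟨-, m, -, heq⟩ := hadj
    have hkm : k = m := by
      by_contra hkm
      have h3 := heq k hkm
      simp only [uvec_self] at h3
      exact hwne1 k h3.symm
    have h2 : k + 1 ≠ m := hkm ▸ fin_add_one_ne hn k
    have h3 := heq _ h2
    simp only [uvec_succ hn] at h3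
    by_cases hkj : k + 1 = j
    · subst hkj
      have h4 : (-1 : ZMod (d (k + 1))) = 2 := h3.trans (if_pos rfl)
      exact z2neg1 hj h4.symm
    · have h4 : (-1 : ZMod (d (k + 1))) = 0 := h3.trans (if_neg hkj)
      exact zneg1 (hd _) h4

/-- Case B: every `d i = 3` and `n ≥ 3`; the vertex `e_0 + e_1 + e_2` survives. -/
lemma wB_not_mem (hn3 : 3 ≤ n) (hd : ∀ i, 3 ≤ d i) :
    (fun i : Fin n => if (i : ℕ) < 3 then (1 : ZMod (d i)) else 0) ∈
      (closedNbhd (torus d) (Set.range fun k => (uvec d k : ∀ i, ZMod (d i))))ᶜ := by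
  have hn : 2 ≤ n := by omega
  set w : ∀ i, ZMod (d i) := fun i : Fin n => if (i : ℕ) < 3 then (1 : ZMod (d i)) else 0 with hw
  have step : ∀ k p : Fin n, (p : ℕ) < 3 → p ≠ k → uvec d k p ≠ w p := by
    intro k p hp3 hpk
    have hwp : w p = 1 := by rw [hw]; exact if_pos hp3
    rw [hwp]
    by_cases h2 : p = k + 1
    · rw [uvec, if_neg hpk, if_pos h2]
      exact fun h => z1neg1 (hd p) h.symm
    · rw [uvec_other hpk h2]
      exact fun h => z1 (hd p) h.symm
  have key : ∀ k : Fin n, ∃ p q : Fin n, p ≠ q ∧ uvec d k p ≠ w p ∧ uvec d k q ≠ w q := by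
    intro k
    by_cases h0 : k = ⟨0, by omega⟩
    · exact ⟨⟨1, by omega⟩, ⟨2, by omega⟩, by simp [Fin.ext_iff],
        step k _ (by simp) (by simp [h0, Fin.ext_iff]),
        step k _ (by simp) (by simp [h0, Fin.ext_iff])⟩
    · by_cases h1 : k = ⟨1, by omega⟩
      · exact ⟨⟨0, by omega⟩, ⟨2, by omega⟩, by simp [Fin.ext_iff],
          step k _ (by simp) (by simp [h1, Fin.ext_iff]),
          step k _ (by simp) (by simp [h1, Fin.ext_iff])⟩
      · exact ⟨⟨0, by omega⟩, ⟨1, by omega⟩, by simp [Fin.ext_iff],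
          step k _ (by simp) (fun h => h0 h.symm),
          step k _ (by simp) (fun h => h1 h.symm)⟩
  intro hmem
  rcases hmem with ⟨k, hk⟩ | ⟨v, ⟨k, rfl⟩, hadj⟩
  · obtain ⟨p, q, hpq, hp, hq⟩ := key k
    exact hp (congrFun hk p)
  · obtain ⟨-, m, -, heq⟩ := hadj
    obtain ⟨p, q, hpq, hp, hq⟩ := key k
    rcases ne_or_eq p m with h1 | h1
    · exact hp (heq p h1)
    · exact hq (heq q (h1 ▸ hpq.symm))

end Witness2

lemma not_reachable_of_isolated {V : Type*} {G : SimpleGraph V} {a b : V} (hab : a ≠ b)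
    (hiso : ∀ c, ¬ G.Adj a c) : ¬ G.Reachable a b := by
  rintro ⟨p⟩
  cases p with
  | nil => exact hab rfl
  | cons h _ => exact hiso _ h

theorem stmt_10 {n : ℕ} (hn : 2 ≤ n) (d : Fin n → ℕ) (hd : ∀ i, 3 ≤ d i)
    (hne : ¬ (n = 2 ∧ ∀ i, d i = 3)) :
    (∃ U : Set (∀ i, ZMod (d i)), U.Finite ∧ U.ncard = n ∧
      (fun _ => 0) ∈ (closedNbhd (torus d) U)ᶜ ∧
      (∀ w ∈ (closedNbhd (torus d) U)ᶜ, ¬ (torus d).Adj (fun _ => 0) w) ∧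
      2 ≤ ((closedNbhd (torus d) U)ᶜ : Set (∀ i, ZMod (d i))).ncard) ∧
    nbConnectivity (torus d) ≤ n := by
  haveI : NeZero n := ⟨by omega⟩
  haveI : ∀ i, NeZero (d i) := fun i => ⟨by have := hd i; omega⟩
  set U : Set (∀ i, ZMod (d i)) := Set.range fun k => (uvec d k : ∀ i, ZMod (d i)) with hU
  have hfin : U.Finite := Set.finite_range _
  have hcard : U.ncard = n := by
    rw [hU, ← Set.image_univ, Set.ncard_image_of_injective _ (uvec_inj hn hd),
      Set.ncard_univ, Nat.card_eq_fintype_card, Fintype.card_fin]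
  have h0mem : (fun _ => 0) ∈ (closedNbhd (torus d) U)ᶜ := zero_not_mem hn hd
  have hiso : ∀ w ∈ (closedNbhd (torus d) U)ᶜ, ¬ (torus d).Adj (fun _ => 0) w :=
    fun w hw hadj => hw (adj_zero_mem hn hd hadj)
  -- a second surviving vertex
  obtain ⟨w, hwmem, hwne⟩ : ∃ w, w ∈ (closedNbhd (torus d) U)ᶜ ∧ w ≠ (fun _ => 0) := by
    by_cases hA : ∃ j, 4 ≤ d j
    · obtain ⟨j, hj⟩ := hA
      refine ⟨_, wA_not_mem hn hd hj, ?_⟩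
      intro h
      have h2 := congrFun h j
      rw [if_pos rfl] at h2
      exact z2 (hd j) h2
    · push_neg at hA
      have hd3 : ∀ i, d i = 3 := fun i => le_antisymm (by have := hA i; omega) (hd i)
      have hn3 : 3 ≤ n := by
        rcases Nat.lt_or_ge n 3 with h | h
        · exact absurd ⟨by omega, hd3⟩ hne
        · exact h
      refine ⟨_, wB_not_mem hn3 hd, ?_⟩
      intro h
      have h2 := congrFun h ⟨0, by omega⟩
      rw [if_pos (by norm_num)] at h2
      exact z1 (hd _) h2
  have hcompl2 : 2 ≤ ((closedNbhd (torus d) U)ᶜ : Set (∀ i, ZMod (d i))).ncard := by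
    have hfc : ((closedNbhd (torus d) U)ᶜ : Set (∀ i, ZMod (d i))).Finite := Set.toFinite _
    exact (Set.one_lt_ncard hfc).mpr ⟨_, hwmem, _, h0mem, hwne⟩
  refine ⟨⟨U, hfin, hcard, h0mem, hiso, hcompl2⟩, ?_⟩
  apply Nat.sInf_le
  refine ⟨U, hfin, hcard, Or.inl ?_⟩
  intro hconn
  have hreach := hconn.preconnected ⟨(fun _ => 0), h0mem⟩ ⟨w, hwmem⟩
  refine not_reachable_of_isolated ?_ ?_ hreach
  · intro h
    exact hwne (congrArg Subtype.val h).symm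
  · intro c hc
    exact hiso c.val c.prop hc
end

section
/- The vertex connectivity of the n-dimensional undirected toroidal mesh C(d_1,...,d_n) with n ≥ 2 and d_i ≥ 3 for all i equals 2n. -/
open SimpleGraph

section helpers
variable {m : ℕ}

lemma zmod_cast_ne_zero (k : ℕ) (hk : 0 < k) (hkm : k < m) : ((k : ℕ) : ZMod m) ≠ 0 := by
  haveI : NeZero m := ⟨by omega⟩
  intro h0
  have := ZMod.val_cast_of_lt hkm
  rw [h0, ZMod.val_zero] at this
  omega

lemma zmod_one_ne_zero (hm : 3 ≤ m) : (1 : ZMod m) ≠ 0 := by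
  have := zmod_cast_ne_zero (m := m) 1 (by omega) (by omega)
  simpa using this

lemma zmod_neg_one_ne_zero (hm : 3 ≤ m) : (-1 : ZMod m) ≠ 0 := by
  simpa [neg_eq_zero] using zmod_one_ne_zero hm

lemma zmod_two_ne_zero (hm : 3 ≤ m) : (2 : ZMod m) ≠ 0 := by
  have := zmod_cast_ne_zero (m := m) 2 (by omega) (by omega)
  simpa using this

end helpers

section torusAdj

variable {n : ℕ} {d : Fin n → ℕ}

lemma adj_update (hd : ∀ i, 3 ≤ d i) (x : ∀ i, ZMod (d i)) (j : Fin n)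
    (a b : ZMod (d j)) (hab : a - b = 1 ∨ b - a = 1) :
    (torus d).Adj (Function.update x j a) (Function.update x j b) := by
  have hne : a ≠ b := by
    rcases hab with h | h <;> intro he <;> rw [he] at h <;>
      simp only [sub_self] at h <;> exact (zmod_one_ne_zero (hd j)) h.symm
  refine ⟨fun he => hne ?_, j, ?_, fun i hi => ?_⟩
  · have := congrFun he j
    simpa using this
  · simpa using hab
  · simp [Function.update_of_ne hi]

/-- A walk moving coordinate `j` by `k` steps of `e = ±1`. -/
lemma line_walk (hd : ∀ i, 3 ≤ d i) (x : ∀ i, ZMod (d i)) (j : Fin n)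
    (e : ZMod (d j)) (he : e = 1 ∨ e = -1) (k : ℕ) :
    ∃ p : (torus d).Walk x (Function.update x j (x j + k • e)),
      ∀ y ∈ p.support, ∃ t : ℕ, t ≤ k ∧ y = Function.update x j (x j + t • e) := by
  induction k with
  | zero =>
    have hx : x = Function.update x j (x j + 0 • e) := by simp
    exact ⟨Walk.nil.copy rfl hx, by
      intro y hy
      rw [Walk.support_copy] at hy
      simp only [Walk.support_nil, List.mem_singleton] at hy
      exact ⟨0, le_rfl, by rw [hy]; exact hx⟩⟩
  | succ k ih =>
    obtain ⟨p, hp⟩ := ih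
    have hadj : (torus d).Adj (Function.update x j (x j + k • e))
        (Function.update x j (x j + (k+1) • e)) := by
      apply adj_update hd
      rcases he with rfl | rfl
      · right; rw [succ_nsmul]; ring
      · left; rw [succ_nsmul]; ring
    refine ⟨p.concat hadj, ?_⟩
    intro y hy
    rw [Walk.support_concat, List.mem_append] at hy
    rcases hy with hy | hy
    · obtain ⟨t, ht, hteq⟩ := hp y hy
      exact ⟨t, by omega, hteq⟩
    · simp only [List.mem_singleton] at hy
      exact ⟨k+1, le_rfl, hy⟩

end torusAdj

/-- Arc choice on `ZMod m`: go from `a` to `b` in direction `e = ±1` avoiding `s`. -/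
lemma arc_avoid {m : ℕ} (hm : 3 ≤ m) (a b s : ZMod m) (hsa : s ≠ a) (hsb : s ≠ b) :
    ∃ (e : ZMod m) (k : ℕ), (e = 1 ∨ e = -1) ∧ a + k • e = b ∧
      ∀ t : ℕ, t ≤ k → a + t • e ≠ s := by
  haveI : NeZero m := ⟨by omega⟩
  set k₀ := (b - a).val with hk₀
  set jj := (s - a).val with hjj
  have hk₀m : k₀ < m := ZMod.val_lt _
  have hjm : jj < m := ZMod.val_lt _
  have hbc : ((k₀ : ℕ) : ZMod m) = b - a := ZMod.natCast_rightInverse _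
  have hsc : ((jj : ℕ) : ZMod m) = s - a := ZMod.natCast_rightInverse _
  have hj0 : jj ≠ 0 := by
    intro h; apply hsa
    have : s - a = 0 := by rw [← hsc, h]; simp
    linear_combination this
  have hjk : jj ≠ k₀ := by
    intro h; apply hsb
    have : s - a = b - a := by rw [← hsc, ← hbc, h]
    linear_combination this
  by_cases hcase : k₀ < jj
  · refine ⟨1, k₀, Or.inl rfl, by rw [nsmul_eq_mul, mul_one, hbc]; ring, ?_⟩
    intro t ht hts
    have htm : t < m := by omega
    have : ((t : ℕ) : ZMod m) = s - a := by
      rw [nsmul_eq_mul, mul_one] at hts; linear_combination hts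
    have : t = jj := by
      have := congrArg ZMod.val this
      rwa [ZMod.val_cast_of_lt htm, ← hjj] at this
    omega
  · -- jj < k₀ ; go in direction -1 with m - k₀ steps
    push_neg at hcase
    have hjk' : jj < k₀ := lt_of_le_of_ne hcase (by omega)
    have hk₀0 : 0 < k₀ := by omega
    refine ⟨-1, m - k₀, Or.inr rfl, ?_, ?_⟩
    · have : (((m - k₀ : ℕ)) : ZMod m) = (((m : ℕ) : ZMod m)) - k₀ := by
        push_cast [Nat.cast_sub (le_of_lt hk₀m)]; ring
      rw [nsmul_eq_mul, this, ZMod.natCast_self, hbc]; ring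
    · intro t ht hts
      have htm : t < m := by omega
      have hcast : ((t : ℕ) : ZMod m) = -(s - a) := by
        rw [nsmul_eq_mul, mul_neg_one] at hts; linear_combination -hts
      have hmj : (((m - jj : ℕ)) : ZMod m) = -(s - a) := by
        push_cast [Nat.cast_sub (le_of_lt hjm)]
        rw [ZMod.natCast_self, hsc]; ring
      have : t = m - jj := by
        have h1 := congrArg ZMod.val hcast
        have h2 := congrArg ZMod.val hmj
        rw [ZMod.val_cast_of_lt htm] at h1
        rw [ZMod.val_cast_of_lt (by omega)] at h2
        omega
      omega

section snoc

variable {n : ℕ} (d : Fin (n+1) → ℕ)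

lemma snoc_inj (c : ZMod (d (Fin.last n))) :
    Function.Injective (fun y : (∀ i : Fin n, ZMod (d i.castSucc)) =>
      (Fin.snoc y c : ∀ i, ZMod (d i))) := by
  intro y y' h
  funext i
  have := congrFun h i.castSucc
  simpa [Fin.snoc_castSucc] using this

/-- Embedding of a layer into the torus. -/
def snocHom (c : ZMod (d (Fin.last n))) :
    torus (fun i : Fin n => d i.castSucc) →g torus d where
  toFun y := Fin.snoc y c
  map_rel' := by
    rintro y y' ⟨hne, j, hdiff, he⟩
    refine ⟨fun h => hne (snoc_inj d c h), j.castSucc, ?_, ?_⟩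
    · simpa [Fin.snoc_castSucc] using hdiff
    · intro i hi
      induction i using Fin.lastCases with
      | last => simp [Fin.snoc_last]
      | cast i' =>
        have : i' ≠ j := fun h => hi (by rw [h])
        simpa [Fin.snoc_castSucc] using he i' this

lemma update_snoc (y : ∀ i : Fin n, ZMod (d i.castSucc)) (c c' : ZMod (d (Fin.last n))) :
    Function.update (Fin.snoc y c : ∀ i, ZMod (d i)) (Fin.last n) c' = Fin.snoc y c' := by
  funext i
  induction i using Fin.lastCases with
  | last => simp
  | cast i' =>
    rw [Function.update_of_ne (Fin.castSucc_lt_last i').ne]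
    simp [Fin.snoc_castSucc]

end snoc

/-- Connectivity of an induced subgraph from walks staying inside the set. -/
lemma induce_connected_of_walks {V : Type*} {G : SimpleGraph V} {s : Set V}
    (hne : s.Nonempty)
    (h : ∀ a b, a ∈ s → b ∈ s → ∃ p : G.Walk a b, ∀ x ∈ p.support, x ∈ s) :
    (G.induce s).Connected := by
  rw [connected_iff]
  constructor
  · rintro ⟨a, ha⟩ ⟨b, hb⟩
    obtain ⟨p, hp⟩ := h a b ha hb
    have hsub : {v | v ∈ p.support} ⊆ s := fun x hx => hp x hx
    have hconn := p.connected_induce_support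
    have hr := hconn.preconnected ⟨a, p.start_mem_support⟩ ⟨b, p.end_mem_support⟩
    have := hr.map (G.induceHomOfLE hsub).toHom
    convert this using 2 <;> rfl
  · obtain ⟨a, ha⟩ := hne
    exact ⟨⟨a, ha⟩⟩

lemma pow_bound : ∀ n : ℕ, 1 ≤ n → 4 * n - 2 < 3 ^ n := by
  intro n hn
  induction n with
  | zero => omega
  | succ n ih =>
    rcases Nat.eq_zero_or_pos n with rfl | hn'
    · simp
    · have h := ih hn'
      have h3 : 3 ^ (n+1) = 3 * 3 ^ n := by ring
      omega

lemma arc_reach {m : ℕ} (hm : 3 ≤ m) (a b : ZMod m) :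
    ∃ k : ℕ, a + k • (1 : ZMod m) = b := by
  haveI : NeZero m := ⟨by omega⟩
  refine ⟨(b - a).val, ?_⟩
  rw [nsmul_eq_mul, mul_one, ZMod.natCast_rightInverse _]
  ring

lemma torus_walk : ∀ n : ℕ, 1 ≤ n → ∀ d : Fin n → ℕ, (∀ i, 3 ≤ d i) →
    ∀ S : Set (∀ i, ZMod (d i)), S.ncard < 2 * n →
    ∀ a b, a ∉ S → b ∉ S → ∃ p : (torus d).Walk a b, ∀ x ∈ p.support, x ∉ S := by
  intro n
  induction n with
  | zero => omega
  | succ n ih =>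
    intro _ d hd S hS a b ha hb
    haveI : ∀ i, NeZero (d i) := fun i => ⟨by have := hd i; omega⟩
    rcases Nat.eq_zero_or_pos n with rfl | hn
    · -- base case: dimension 1, a cycle
      set j : Fin 1 := 0 with hj
      have vext : ∀ x y : ∀ i : Fin 1, ZMod (d i), x j = y j → x = y := by
        intro x y h
        funext i
        have : i = j := Subsingleton.elim i j
        rw [this]; exact h
      have hupd : ∀ (x : ∀ i : Fin 1, ZMod (d i)) (v : ZMod (d j)),
          (Function.update x j v) j = v := by intro x v; simp
      have hS1 : S.ncard ≤ 1 := by omega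
      rcases Set.eq_empty_or_nonempty S with rfl | ⟨s₀, hs₀⟩
      · obtain ⟨k, hk⟩ := arc_reach (hd j) (a j) (b j)
        obtain ⟨p, hp⟩ := line_walk hd a j 1 (Or.inl rfl) k
        have hend : Function.update a j (a j + k • (1 : ZMod (d j))) = b :=
          vext _ _ (by rw [hupd]; exact hk)
        exact ⟨p.copy rfl hend, by simp⟩
      · have hSs : ∀ x ∈ S, x = s₀ := by
          intro x hx
          by_contra hxs
          have hsub : {x, s₀} ⊆ S := by
            rintro y (rfl | rfl) <;> assumption
          have := Set.ncard_le_ncard hsub (Set.toFinite S)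
          rw [Set.ncard_pair hxs] at this
          omega
        have hsa : s₀ j ≠ a j := fun h => ha ((vext s₀ a h) ▸ hs₀)
        have hsb : s₀ j ≠ b j := fun h => hb ((vext s₀ b h) ▸ hs₀)
        obtain ⟨e, k, he, heq, havoid⟩ := arc_avoid (hd j) (a j) (b j) (s₀ j) hsa hsb
        obtain ⟨p, hp⟩ := line_walk hd a j e he k
        have hend : Function.update a j (a j + k • e) = b :=
          vext _ _ (by rw [hupd]; exact heq)
        refine ⟨p.copy rfl hend, ?_⟩
        intro x hx
        rw [Walk.support_copy] at hx
        obtain ⟨t, ht, rfl⟩ := hp x hx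
        intro hxS
        have := hSs _ hxS
        apply havoid t ht
        rw [← hupd a (a j + t • e), this]
    · -- inductive step: dimension n+1 with n ≥ 1
      have hdL : 3 ≤ d (Fin.last n) := hd (Fin.last n)
      set Sc : ZMod (d (Fin.last n)) → Set (∀ i : Fin n, ZMod (d i.castSucc)) :=
        fun c => (fun y => (Fin.snoc y c : ∀ i, ZMod (d i))) ⁻¹' S with hSc
      set good : ZMod (d (Fin.last n)) → Prop := fun c => (Sc c).ncard < 2 * n with hgood
      have snoc_mem : ∀ (c : ZMod (d (Fin.last n))) y, y ∈ Sc c ↔ (Fin.snoc y c : ∀ i, ZMod (d i)) ∈ S :=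
        fun c y => Iff.rfl
      -- disjoint layer counting
      have key_disj : ∀ c c' : ZMod (d (Fin.last n)), c ≠ c' →
          (Sc c).ncard + (Sc c').ncard ≤ S.ncard := by
        intro c c' hcc
        have h1 : ((fun y => (Fin.snoc y c : ∀ i, ZMod (d i))) '' (Sc c)).ncard
            = (Sc c).ncard := Set.ncard_image_of_injective _ (snoc_inj d c)
        have h2 : ((fun y => (Fin.snoc y c' : ∀ i, ZMod (d i))) '' (Sc c')).ncard
            = (Sc c').ncard := Set.ncard_image_of_injective _ (snoc_inj d c')
        have hdisj : Disjoint ((fun y => (Fin.snoc y c : ∀ i, ZMod (d i))) '' (Sc c))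
            ((fun y => (Fin.snoc y c' : ∀ i, ZMod (d i))) '' (Sc c')) := by
          rw [Set.disjoint_left]
          rintro x ⟨y, _, rfl⟩ ⟨y', _, hy'⟩
          apply hcc
          have h2 := congrFun hy' (Fin.last n)
          simp only [Fin.snoc_last] at h2
          exact h2.symm
        have hsub : ((fun y => (Fin.snoc y c : ∀ i, ZMod (d i))) '' (Sc c))
            ∪ ((fun y => (Fin.snoc y c' : ∀ i, ZMod (d i))) '' (Sc c')) ⊆ S :=
          Set.union_subset (Set.image_preimage_subset _ _) (Set.image_preimage_subset _ _)
        calc (Sc c).ncard + (Sc c').ncard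
            = (((fun y => (Fin.snoc y c : ∀ i, ZMod (d i))) '' (Sc c))
              ∪ ((fun y => (Fin.snoc y c' : ∀ i, ZMod (d i))) '' (Sc c'))).ncard := by
              rw [Set.ncard_union_eq hdisj, h1, h2]
          _ ≤ S.ncard := Set.ncard_le_ncard hsub (Set.toFinite S)
      have unique_bad : ∀ c c' : ZMod (d (Fin.last n)), c ≠ c' → ¬ good c → good c' := by
        intro c c' hcc hc
        simp only [hgood, not_lt] at hc ⊢
        have := key_disj c c' hcc
        omega
      -- within-layer walks
      have layer_walk : ∀ (c : ZMod (d (Fin.last n))), good c → ∀ g g', g ∉ Sc c → g' ∉ Sc c →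
          ∃ p : (torus d).Walk (Fin.snoc g c) (Fin.snoc g' c), ∀ x ∈ p.support, x ∉ S := by
        intro c hc g g' hg hg'
        obtain ⟨q, hq⟩ := ih hn (fun i : Fin n => d i.castSucc) (fun i => hd i.castSucc)
          (Sc c) hc g g' hg hg'
        refine ⟨q.map (snocHom d c), ?_⟩
        intro x hx
        have hx : x ∈ (q.map (snocHom d c)).support := hx
        rw [Walk.support_map, List.mem_map] at hx
        obtain ⟨z, hz, rfl⟩ := hx
        exact fun hmem => hq z hz hmem
      -- crossing between two good layers
      have crossing : ∀ c c' : ZMod (d (Fin.last n)), good c → good c' →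
          ∃ g, g ∉ Sc c ∧ g ∉ Sc c' := by
        intro c c' hc hc'
        have hcard : (Sc c ∪ Sc c').ncard < Fintype.card (∀ i : Fin n, ZMod (d i.castSucc)) := by
          have hu := Set.ncard_union_le (Sc c) (Sc c')
          have hp : 3 ^ n ≤ Fintype.card (∀ i : Fin n, ZMod (d i.castSucc)) := by
            rw [Fintype.card_pi]
            calc 3 ^ n = ∏ _i : Fin n, 3 := by
                  rw [Finset.prod_const, Finset.card_univ, Fintype.card_fin]
              _ ≤ ∏ i : Fin n, Fintype.card (ZMod (d i.castSucc)) := by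
                  apply Finset.prod_le_prod' 
                  intro i _
                  rw [ZMod.card]
                  exact hd i.castSucc
          have hpow := pow_bound n hn
          simp only [hgood] at hc hc'
          omega
        by_contra hcon
        push_neg at hcon
        have : Sc c ∪ Sc c' = Set.univ := by
          ext g
          simp only [Set.mem_union, Set.mem_univ, iff_true]
          by_contra hg
          push_neg at hg
          exact hg.2 (hcon g hg.1)
        rw [this, Set.ncard_univ, Nat.card_eq_fintype_card] at hcard
        omega
      -- routing across consecutive good layers
      have route : ∀ (e : ZMod (d (Fin.last n))), (e = 1 ∨ e = -1) → ∀ k : ℕ, ∀ c : ZMod (d (Fin.last n)),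
          (∀ t : ℕ, t ≤ k → good (c + t • e)) → ∀ g g', g ∉ Sc c → g' ∉ Sc (c + k • e) →
          ∃ p : (torus d).Walk (Fin.snoc g c) (Fin.snoc g' (c + k • e)),
            ∀ x ∈ p.support, x ∉ S := by
        intro e he k
        induction k with
        | zero =>
          intro c hgd g g' hg hg'
          have h0 : c + (0:ℕ) • e = c := by simp
          rw [h0] at hg'
          obtain ⟨p, hp⟩ := layer_walk c (by simpa [h0] using hgd 0 le_rfl) g g' hg hg'
          exact ⟨p.copy rfl (by rw [h0]), by
            intro x hx; rw [Walk.support_copy] at hx; exact hp x hx⟩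
        | succ k ihk =>
          intro c hgd g g' hg hg'
          set c₁ := c + k • e with hc₁
          set c₂ := c + (k+1) • e with hc₂
          have hc₂e : c₂ = c₁ + e := by rw [hc₁, hc₂, succ_nsmul]; ring
          have hgood₁ : good c₁ := hgd k (by omega)
          have hgood₂ : good c₂ := hgd (k+1) le_rfl
          obtain ⟨h, hh₁, hh₂⟩ := crossing c₁ c₂ hgood₁ hgood₂
          obtain ⟨p₁, hp₁⟩ := ihk c (fun t ht => hgd t (by omega)) g h hg hh₁
          have hadj : (torus d).Adj (Fin.snoc h c₁ : ∀ i, ZMod (d i)) (Fin.snoc h c₂) := by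
            have := adj_update hd (Fin.snoc h c₁ : ∀ i, ZMod (d i)) (Fin.last n) c₁ c₂ (by
              rcases he with rfl | rfl
              · right; rw [hc₂e]; ring
              · left; rw [hc₂e]; ring)
            rwa [update_snoc d h c₁ c₁, update_snoc d h c₁ c₂] at this
          obtain ⟨p₂, hp₂⟩ := layer_walk c₂ hgood₂ h g' hh₂ hg'
          refine ⟨p₁.append (Walk.cons hadj p₂), ?_⟩
          intro x hx
          rw [Walk.mem_support_append_iff] at hx
          rcases hx with hx | hx
          · exact hp₁ x hx
          · rw [Walk.support_cons, List.mem_cons] at hx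
            rcases hx with rfl | hx
            · exact hh₁
            · exact hp₂ x hx
      -- escaping a possibly bad layer
      have escape : ∀ x, x ∉ S → ∃ (c : ZMod (d (Fin.last n))) (g : ∀ i : Fin n, ZMod (d i.castSucc)),
          good c ∧ g ∉ Sc c ∧ ∃ p : (torus d).Walk x (Fin.snoc g c),
            ∀ y ∈ p.support, y ∉ S := by
        intro x hx
        have hsnoc : (Fin.snoc (Fin.init x) (x (Fin.last n)) : ∀ i, ZMod (d i)) = x := by
          exact Fin.snoc_init_self x
        by_cases hgx : good (x (Fin.last n))
        · refine ⟨x (Fin.last n), Fin.init x, hgx, by rw [snoc_mem, hsnoc]; exact hx,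
            Walk.nil.copy rfl hsnoc.symm, ?_⟩
          intro y hy
          rw [Walk.support_copy] at hy
          simp only [Walk.support_nil, List.mem_singleton] at hy
          rwa [hy]
        · -- bad layer: escape through one of the two last-coordinate neighbours
          have hone : (1 : ZMod (d (Fin.last n))) ≠ 0 := zmod_one_ne_zero hdL
          have hx₁ : x (Fin.last n) + 1 ≠ x (Fin.last n) := fun h => hone (by linear_combination h)
          have hx₂ : x (Fin.last n) - 1 ≠ x (Fin.last n) := fun h => hone (by linear_combination -h)
          have hcand : (Fin.snoc (Fin.init x) (x (Fin.last n) + 1) : ∀ i, ZMod (d i)) ∉ S ∨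
              (Fin.snoc (Fin.init x) (x (Fin.last n) - 1) : ∀ i, ZMod (d i)) ∉ S := by
            by_contra hboth
            push_neg at hboth
            obtain ⟨hb₁, hb₂⟩ := hboth
            set J := (fun y => (Fin.snoc y (x (Fin.last n)) : ∀ i, ZMod (d i))) '' (Sc (x (Fin.last n))) with hJ
            have hJcard : J.ncard = (Sc (x (Fin.last n))).ncard :=
              Set.ncard_image_of_injective _ (snoc_inj d (x (Fin.last n)))
            have hlast : ∀ (y : ∀ i : Fin n, ZMod (d i.castSucc)) (cc : ZMod (d (Fin.last n))),
                (Fin.snoc y cc : ∀ i, ZMod (d i)) (Fin.last n) = cc := by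
              intro y cc; exact Fin.snoc_last _ _
            have hn₁ : (Fin.snoc (Fin.init x) (x (Fin.last n) + 1) : ∀ i, ZMod (d i)) ∉ J := by
              rintro ⟨y, -, hy⟩
              have := congrArg (fun z => z (Fin.last n)) hy
              simp only [hlast] at this
              exact hx₁ this.symm
            have hn₂ : (Fin.snoc (Fin.init x) (x (Fin.last n) - 1) : ∀ i, ZMod (d i)) ∉ J := by
              rintro ⟨y, -, hy⟩
              have := congrArg (fun z => z (Fin.last n)) hy
              simp only [hlast] at this
              exact hx₂ this.symm
            have hne12 : (Fin.snoc (Fin.init x) (x (Fin.last n) + 1) : ∀ i, ZMod (d i)) ≠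
                Fin.snoc (Fin.init x) (x (Fin.last n) - 1) := by
              intro h
              have := congrArg (fun z => z (Fin.last n)) h
              simp only [hlast] at this
              exact zmod_two_ne_zero hdL (by linear_combination this)
            have hsub : insert (Fin.snoc (Fin.init x) (x (Fin.last n) + 1) : ∀ i, ZMod (d i))
                (insert (Fin.snoc (Fin.init x) (x (Fin.last n) - 1) : ∀ i, ZMod (d i)) J) ⊆ S := by
              rintro y (rfl | rfl | hy)
              · exact hb₁
              · exact hb₂
              · exact Set.image_preimage_subset _ _ hy
            have hcount := Set.ncard_le_ncard hsub (Set.toFinite S)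
            rw [Set.ncard_insert_of_notMem (by
                  rintro (h | h)
                  · exact hne12 h
                  · exact hn₁ h) (Set.toFinite _),
              Set.ncard_insert_of_notMem hn₂ (Set.toFinite _), hJcard] at hcount
            simp only [hgood, not_lt] at hgx
            omega
          have hstep : ∀ c' : ZMod (d (Fin.last n)), (x (Fin.last n) - c' = 1 ∨ c' - x (Fin.last n) = 1) →
              (Fin.snoc (Fin.init x) c' : ∀ i, ZMod (d i)) ∉ S →
              ∃ (c : ZMod (d (Fin.last n))) (g : ∀ i : Fin n, ZMod (d i.castSucc)),
                good c ∧ g ∉ Sc c ∧ ∃ p : (torus d).Walk x (Fin.snoc g c),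
                  ∀ y ∈ p.support, y ∉ S := by
            intro c' hc' hc'S
            have hc'x : c' ≠ x (Fin.last n) := by
              rcases hc' with h | h
              · intro he; rw [he] at h; simp only [sub_self] at h; exact hone h.symm
              · intro he; rw [he] at h; simp only [sub_self] at h; exact hone h.symm
            have hgc' : good c' := unique_bad (x (Fin.last n)) c' (Ne.symm hc'x) hgx
            have hadj : (torus d).Adj x (Fin.snoc (Fin.init x) c' : ∀ i, ZMod (d i)) := by
              have := adj_update hd x (Fin.last n) (x (Fin.last n)) c' hc'
              have hupd : Function.update x (Fin.last n) c'
                  = (Fin.snoc (Fin.init x) c' : ∀ i, ZMod (d i)) := by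
                conv_lhs => rw [← Fin.snoc_init_self x]
                exact update_snoc d (Fin.init x) _ c'
              rwa [Function.update_eq_self, hupd] at this
            exact ⟨c', Fin.init x, hgc', by rw [snoc_mem]; exact hc'S,
              Walk.cons hadj Walk.nil, by
                intro y hy
                simp only [Walk.support_cons, Walk.support_nil, List.mem_cons,
                  List.mem_singleton] at hy
                rcases hy with rfl | rfl | h
                · exact hx
                · exact hc'S
                · exact absurd h (by simp)⟩
          rcases hcand with h | h
          · exact hstep (x (Fin.last n) + 1) (Or.inr (by ring)) h
          · exact hstep (x (Fin.last n) - 1) (Or.inl (by ring)) h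
      -- final assembly
      obtain ⟨ca, ga, hgca, hga, pa, hpa⟩ := escape a ha
      obtain ⟨cb, gb, hgcb, hgb, pb, hpb⟩ := escape b hb
      have hroute : ∃ p : (torus d).Walk (Fin.snoc ga ca : ∀ i, ZMod (d i)) (Fin.snoc gb cb),
          ∀ x ∈ p.support, x ∉ S := by
        by_cases hbad : ∃ c₀, ¬ good c₀
        · obtain ⟨c₀, hc₀⟩ := hbad
          have hca : ca ≠ c₀ := fun h => hc₀ (h ▸ hgca)
          have hcb : cb ≠ c₀ := fun h => hc₀ (h ▸ hgcb)
          obtain ⟨e, k, he, heq, havoid⟩ := arc_avoid hdL ca cb c₀ (Ne.symm hca) (Ne.symm hcb)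
          obtain ⟨p, hp⟩ := route e he k ca
            (fun t ht => unique_bad c₀ _ (Ne.symm (havoid t ht)) hc₀) ga gb hga
            (by rw [heq]; exact hgb)
          exact ⟨p.copy rfl (by rw [heq]), by
            intro x hx; rw [Walk.support_copy] at hx; exact hp x hx⟩
        · push_neg at hbad
          obtain ⟨k, hk⟩ := arc_reach hdL ca cb
          obtain ⟨p, hp⟩ := route 1 (Or.inl rfl) k ca (fun t _ => hbad _) ga gb hga
            (by rw [hk]; exact hgb)
          exact ⟨p.copy rfl (by rw [hk]), by
            intro x hx; rw [Walk.support_copy] at hx; exact hp x hx⟩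
      obtain ⟨pr, hpr⟩ := hroute
      refine ⟨pa.append (pr.append pb.reverse), ?_⟩
      intro x hx
      rw [Walk.mem_support_append_iff, Walk.mem_support_append_iff] at hx
      rcases hx with hx | hx | hx
      · exact hpa x hx
      · exact hpr x hx
      · rw [Walk.support_reverse, List.mem_reverse] at hx
        exact hpb x hx

private lemma no_reach {V' : Type*} {G : SimpleGraph V'} {u v : V'} (hne : u ≠ v)
    (hdeg : ∀ x, ¬ G.Adj u x) : ¬ G.Reachable u v := by
  rintro ⟨p⟩
  cases p with
  | nil => exact hne rfl
  | cons h q => exact hdeg _ h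

theorem stmt_13 {n : ℕ} (hn : 2 ≤ n) (d : Fin n → ℕ) (hd : ∀ i, 3 ≤ d i) :
    vConnectivity (torus d) = 2 * n := by
  haveI : ∀ i, NeZero (d i) := fun i => ⟨by have := hd i; omega⟩
  set V := ∀ i, ZMod (d i) with hV
  -- cardinality of the torus
  have hcardV : 3 ^ n ≤ Nat.card V := by
    rw [Nat.card_eq_fintype_card, Fintype.card_pi]
    calc 3 ^ n = ∏ _i : Fin n, 3 := by
          rw [Finset.prod_const, Finset.card_univ, Fintype.card_fin]
      _ ≤ ∏ i : Fin n, Fintype.card (ZMod (d i)) := by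
          apply Finset.prod_le_prod'
          intro i _
          rw [ZMod.card]
          exact hd i
  have hpow := pow_bound n (by omega)
  -- the cutting set: the 2n neighbours of the origin
  set f : Fin n × Bool → V :=
    fun p => Function.update (0 : V) p.1 (if p.2 then (1 : ZMod (d p.1)) else -1) with hf
  set U : Set V := Set.range f with hU
  have hfv : ∀ p : Fin n × Bool, f p p.1 = (if p.2 then (1 : ZMod (d p.1)) else -1) := by
    intro p; simp [hf]
  have hfo : ∀ (p : Fin n × Bool) (i : Fin n), i ≠ p.1 → f p i = 0 := by
    intro p i hi; simp only [hf, Function.update_of_ne hi]; rfl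
  have hone : ∀ i : Fin n, (1 : ZMod (d i)) ≠ 0 := fun i => zmod_one_ne_zero (hd i)
  have hnegone : ∀ i : Fin n, (-1 : ZMod (d i)) ≠ 0 := fun i => zmod_neg_one_ne_zero (hd i)
  have hfne : ∀ (p : Fin n × Bool), (if p.2 then (1 : ZMod (d p.1)) else -1) ≠ 0 := by
    intro p; cases hp : p.2 <;> simp [hone, hnegone]
  have hinj : Function.Injective f := by
    rintro ⟨j, s⟩ ⟨j', s'⟩ h
    have hjj : j = j' := by
      by_contra hne
      have h1 := congrFun h j
      rw [hfv ⟨j, s⟩] at h1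
      rw [hfo ⟨j', s'⟩ j (by simpa using hne)] at h1
      exact hfne ⟨j, s⟩ h1
    subst hjj
    have h1 := congrFun h j
    rw [hfv ⟨j, s⟩, hfv ⟨j, s'⟩] at h1
    cases s <;> cases s' <;> simp only [Prod.mk.injEq, true_and, Bool.false_eq_true, Bool.true_eq_false, ↓reduceIte, and_true] at h1 ⊢
    · exact zmod_two_ne_zero (hd j) (by linear_combination -h1)
    · exact zmod_two_ne_zero (hd j) (by linear_combination h1)
  have hcardU : U.ncard = 2 * n := by
    rw [hU, ← Set.image_univ, Set.ncard_image_of_injective _ hinj, Set.ncard_univ,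
      Nat.card_eq_fintype_card, Fintype.card_prod, Fintype.card_fin, Fintype.card_bool]
    ring
  have hU0 : (0 : V) ∉ U := by
    rintro ⟨p, hp⟩
    have h1 := congrFun hp p.1
    rw [hfv p] at h1
    exact hfne p h1
  have hnbr : ∀ v : V, (torus d).Adj 0 v → v ∈ U := by
    rintro v ⟨hne, j, hdf, he⟩
    have hvi : ∀ i, i ≠ j → v i = 0 := by
      intro i hi
      have := he i hi
      simpa using this.symm
    have hvj : v j = 1 ∨ v j = -1 := by
      rcases hdf with h | h
      · right; have : (0:V) j = 0 := rfl; rw [this] at h; linear_combination -h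
      · left; have : (0:V) j = 0 := rfl; rw [this] at h; linear_combination h
    rcases hvj with h | h
    · refine ⟨⟨j, true⟩, ?_⟩
      funext i
      by_cases hi : i = j
      · subst hi; rw [hfv ⟨i, true⟩]; simp [h]
      · rw [hfo ⟨j, true⟩ i hi, hvi i hi]
    · refine ⟨⟨j, false⟩, ?_⟩
      funext i
      by_cases hi : i = j
      · subst hi; rw [hfv ⟨i, false⟩]; simp [h]
      · rw [hfo ⟨j, false⟩ i hi, hvi i hi]
  -- the far witness w
  have hn1 : (1 : ℕ) < n := by omega
  set j0 : Fin n := ⟨0, by omega⟩ with hj0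
  set j1 : Fin n := ⟨1, by omega⟩ with hj1
  have hj01 : j0 ≠ j1 := by simp [hj0, hj1, Fin.ext_iff]
  set w : V := Function.update (Function.update (0 : V) j0 1) j1 1 with hw
  have hwj0 : w j0 = 1 := by rw [hw, Function.update_of_ne hj01]; simp
  have hwj1 : w j1 = 1 := by rw [hw]; simp
  have hwn0 : w ≠ 0 := by
    intro h
    have := congrFun h j0
    rw [hwj0] at this
    exact hone j0 this
  have hwU : w ∉ U := by
    rintro ⟨⟨j, s⟩, hp⟩
    by_cases hj : j = j0
    · have h1 := congrFun hp j1
      rw [hfo ⟨j, s⟩ j1 (by rw [hj]; exact hj01.symm), hwj1] at h1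
      exact hone j1 h1.symm
    · have h1 := congrFun hp j0
      rw [hfo ⟨j, s⟩ j0 (fun hh => hj hh.symm), hwj0] at h1
      exact hone j0 h1.symm
  -- U disconnects
  have hdisc : ¬ ((torus d).induce Uᶜ).Connected := by
    intro hC
    have h0 : (0 : V) ∈ Uᶜ := hU0
    have hwc : w ∈ Uᶜ := hwU
    have hreach := hC.preconnected ⟨0, h0⟩ ⟨w, hwc⟩
    refine no_reach ?_ ?_ hreach
    · intro h
      exact hwn0 (congrArg Subtype.val h).symm
    · rintro ⟨x, hx⟩ hadj
      exact hx (hnbr x hadj)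
  have hmem : 2 * n ∈ {k | ∃ U : Set V, U.Finite ∧ U.ncard = k ∧
      (¬ ((torus d).induce Uᶜ).Connected ∨ ∃ v, Uᶜ = ({v} : Set V))} :=
    ⟨U, Set.toFinite U, hcardU, Or.inl hdisc⟩
  -- lower bound
  have hlow : ∀ k ∈ {k | ∃ U : Set V, U.Finite ∧ U.ncard = k ∧
      (¬ ((torus d).induce Uᶜ).Connected ∨ ∃ v, Uᶜ = ({v} : Set V))}, 2 * n ≤ k := by
    rintro k ⟨T, hTf, hTc, hTcut⟩
    by_contra hlt
    push_neg at hlt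
    have hTcard : T.ncard < 2 * n := by omega
    have hcompl : 2 ≤ Tᶜ.ncard := by
      have hsum := Set.ncard_add_ncard_compl T
      omega
    have hconn : ((torus d).induce Tᶜ).Connected := by
      apply induce_connected_of_walks
      · rcases Set.eq_empty_or_nonempty Tᶜ with h | h
        · rw [h] at hcompl; simp at hcompl
        · exact h
      · intro x y hx hy
        obtain ⟨p, hp⟩ := torus_walk n (by omega) d hd T hTcard x y hx hy
        exact ⟨p, fun z hz => hp z hz⟩
    rcases hTcut with h | ⟨v, hv⟩
    · exact h hconn
    · rw [hv, Set.ncard_singleton] at hcompl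
      omega
  have hne : Set.Nonempty {k | ∃ U : Set V, U.Finite ∧ U.ncard = k ∧
      (¬ ((torus d).induce Uᶜ).Connected ∨ ∃ v, Uᶜ = ({v} : Set V))} := ⟨2 * n, hmem⟩
  exact le_antisymm (Nat.sInf_le hmem) (le_csInf hne hlow)
end

section
/- Let C = C(d_1,d_2) be a 2-dimensional toroidal mesh with d_1, d_2 ≥ 3, and let u be any single vertex. Then the survival graph C ⊖ {u} = C − N[u] is a connected graph with vertex connectivity at least 2. -/
namespace NB
variable {d : Fin 2 → ℕ}

def vtx (u : ∀ i, ZMod (d i)) (a : ZMod (d 0)) (b : ZMod (d 1)) : ∀ i, ZMod (d i) :=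
  Fin.cons (u 0 + a) (Fin.cons (u 1 + b) finZeroElim)

@[simp] lemma vtx_zero (u : ∀ i, ZMod (d i)) (a b) : vtx u a b 0 = u 0 + a := rfl
@[simp] lemma vtx_one (u : ∀ i, ZMod (d i)) (a b) : vtx u a b 1 = u 1 + b := rfl

lemma funext2 {v w : ∀ i, ZMod (d i)} (h0 : v 0 = w 0) (h1 : v 1 = w 1) : v = w := by
  funext i
  fin_cases i
  · exact h0
  · exact h1

lemma vtx_eq_iff (u : ∀ i, ZMod (d i)) {a a' b b'} :
    vtx u a b = vtx u a' b' ↔ a = a' ∧ b = b' := by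
  constructor
  · intro h
    constructor
    · have := congrFun h 0; simpa using this
    · have := congrFun h 1; simpa using this
  · rintro ⟨rfl, rfl⟩; rfl

lemma eq_vtx (u v : ∀ i, ZMod (d i)) : v = vtx u (v 0 - u 0) (v 1 - u 1) := by
  apply funext2 <;> simp

lemma zmod_one_ne_zero {n : ℕ} (h : 3 ≤ n) : (1 : ZMod n) ≠ 0 := by
  haveI : NeZero n := ⟨by omega⟩
  intro he
  have := (ZMod.natCast_eq_zero_iff 1 n).mp (by exact_mod_cast he)
  have := Nat.le_of_dvd one_pos this
  omega

lemma zmod_one_ne_neg_one {n : ℕ} (h : 3 ≤ n) : (1 : ZMod n) ≠ -1 := by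
  haveI : NeZero n := ⟨by omega⟩
  intro he
  have h2 : ((2 : ℕ) : ZMod n) = 0 := by push_cast; linear_combination he
  have := (ZMod.natCast_eq_zero_iff 2 n).mp h2
  have := Nat.le_of_dvd two_pos this
  omega

lemma zmod_neg_one_ne_zero {n : ℕ} (h : 3 ≤ n) : (-1 : ZMod n) ≠ 0 := by
  intro he
  exact zmod_one_ne_zero h (by linear_combination -he)

lemma zmod_cast_ne_zero {n : ℕ} (h : 3 ≤ n) {k : ℕ} (h1 : 1 ≤ k) (h2 : k < n) :
    ((k : ZMod n)) ≠ 0 := by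
  haveI : NeZero n := ⟨by omega⟩
  intro he
  have := (ZMod.natCast_eq_zero_iff k n).mp he
  have := Nat.le_of_dvd (by omega) this
  omega

lemma zmod_val_cast {n : ℕ} (h : 3 ≤ n) {k : ℕ} (h2 : k < n) : ((k : ZMod n)).val = k :=
  ZMod.val_cast_of_lt h2

lemma zmod_cast_val {n : ℕ} [NeZero n] (a : ZMod n) : ((a.val : ℕ) : ZMod n) = a :=
  ZMod.natCast_rightInverse a

lemma zmod_cast_sub_one {n : ℕ} (h : 3 ≤ n) : ((n - 1 : ℕ) : ZMod n) = -1 := by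
  have : ((n - 1 : ℕ) : ZMod n) = (n : ZMod n) - 1 := by
    rw [Nat.cast_sub (by omega)]; simp
  rw [this, ZMod.natCast_self]; ring

lemma zmod_neg_one_val {n : ℕ} (h : 3 ≤ n) : ((-1 : ZMod n)).val = n - 1 := by
  rw [← zmod_cast_sub_one h]
  exact ZMod.val_cast_of_lt (by omega)

lemma zmod_val_one {n : ℕ} (h : 3 ≤ n) : ((1 : ZMod n)).val = 1 := by
  have : ((1:ℕ) : ZMod n) = (1 : ZMod n) := by push_cast; rfl
  rw [← this]; exact ZMod.val_cast_of_lt (by omega)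

lemma zmod_val_injective {n : ℕ} [NeZero n] {a b : ZMod n} (h : a.val = b.val) : a = b := by
  rw [← zmod_cast_val a, ← zmod_cast_val b, h]

end NB

namespace NB
variable {d : Fin 2 → ℕ}

lemma adj_iff (hd : ∀ i, 3 ≤ d i) (u : ∀ i, ZMod (d i)) (a a' : ZMod (d 0)) (b b' : ZMod (d 1)) :
    (torus d).Adj (vtx u a b) (vtx u a' b') ↔
      ((b = b' ∧ (a - a' = 1 ∨ a' - a = 1)) ∨ (a = a' ∧ (b - b' = 1 ∨ b' - b = 1))) := by
  constructor
  · rintro ⟨hne, j, hdiff, heq⟩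
    fin_cases j
    · left
      have hb : b = b' := by
        have := heq 1 (by decide)
        simpa using this
      refine ⟨hb, ?_⟩
      simp only [Fin.mk_zero, vtx_zero] at hdiff
      rcases hdiff with h | h
      · left; linear_combination h
      · right; linear_combination h
    · right
      have ha : a = a' := by
        have := heq 0 (by decide)
        simpa using this
      refine ⟨ha, ?_⟩
      simp only [Fin.mk_one, vtx_one] at hdiff
      rcases hdiff with h | h
      · left; linear_combination h
      · right; linear_combination h
  · rintro (⟨rfl, hA⟩ | ⟨rfl, hB⟩)
    · refine ⟨?_, 0, ?_, ?_⟩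
      · intro he
        rcases (vtx_eq_iff u).mp he with ⟨rfl, -⟩
        rcases hA with h | h <;>
          exact zmod_one_ne_zero (hd 0) (by linear_combination -h)
      · simp only [vtx_zero]
        rcases hA with h | h
        · left; linear_combination h
        · right; linear_combination h
      · intro i hi
        fin_cases i
        · exact absurd rfl hi
        · rfl
    · refine ⟨?_, 1, ?_, ?_⟩
      · intro he
        rcases (vtx_eq_iff u).mp he with ⟨-, rfl⟩
        rcases hB with h | h <;>
          exact zmod_one_ne_zero (hd 1) (by linear_combination -h)
      · simp only [vtx_one]
        rcases hB with h | h
        · left; linear_combination h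
        · right; linear_combination h
      · intro i hi
        fin_cases i
        · rfl
        · exact absurd rfl hi

lemma adjX (hd : ∀ i, 3 ≤ d i) (u : ∀ i, ZMod (d i)) {a a' : ZMod (d 0)} (b : ZMod (d 1))
    (h : a - a' = 1 ∨ a' - a = 1) : (torus d).Adj (vtx u a b) (vtx u a' b) :=
  (adj_iff hd u a a' b b).mpr (Or.inl ⟨rfl, h⟩)

lemma adjY (hd : ∀ i, 3 ≤ d i) (u : ∀ i, ZMod (d i)) (a : ZMod (d 0)) {b b' : ZMod (d 1)}
    (h : b - b' = 1 ∨ b' - b = 1) : (torus d).Adj (vtx u a b) (vtx u a b') :=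
  (adj_iff hd u a a b b').mpr (Or.inr ⟨rfl, h⟩)

lemma mem_cn_iff (hd : ∀ i, 3 ≤ d i) (u : ∀ i, ZMod (d i)) (a : ZMod (d 0)) (b : ZMod (d 1)) :
    vtx u a b ∈ closedNbhd (torus d) {u} ↔
      ((a = 0 ∧ b = 0) ∨ (a = 1 ∧ b = 0) ∨ (a = -1 ∧ b = 0) ∨
        (a = 0 ∧ b = 1) ∨ (a = 0 ∧ b = -1)) := by
  have hu : u = vtx u 0 0 := by apply funext2 <;> simp
  constructor
  · rintro (h | ⟨w, hw, hadj⟩)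
    · rw [Set.mem_singleton_iff] at h
      have h2 : vtx u a b = vtx u 0 0 := by rw [← hu]; exact h
      exact Or.inl ((vtx_eq_iff u).mp h2)
    · rw [Set.mem_singleton_iff] at hw
      rw [hw] at hadj
      have hadj2 : (torus d).Adj (vtx u 0 0) (vtx u a b) := by rwa [← hu]
      rw [adj_iff hd] at hadj2
      rcases hadj2 with ⟨hb, h | h⟩ | ⟨ha, h | h⟩
      · right; right; left
        exact ⟨by linear_combination -h, hb.symm⟩
      · right; left
        exact ⟨by linear_combination h, hb.symm⟩
      · right; right; right; right
        exact ⟨ha.symm, by linear_combination -h⟩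
      · right; right; right; left
        exact ⟨ha.symm, by linear_combination h⟩
  · have key : ∀ (a : ZMod (d 0)) (b : ZMod (d 1)),
        ((0 = b ∧ (0 - a = 1 ∨ a - 0 = 1)) ∨ (0 = a ∧ (0 - b = 1 ∨ b - 0 = 1))) →
        vtx u a b ∈ closedNbhd (torus d) {u} := by
      intro a b hab
      right
      refine ⟨u, rfl, ?_⟩
      have : (torus d).Adj (vtx u 0 0) (vtx u a b) :=
        (adj_iff hd u 0 a 0 b).mpr hab
      rwa [← hu] at this
    rintro (⟨rfl, rfl⟩ | ⟨rfl, rfl⟩ | ⟨rfl, rfl⟩ | ⟨rfl, rfl⟩ | ⟨rfl, rfl⟩)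
    · left; exact Set.mem_singleton_iff.mpr (by rw [← hu])
    · exact key 1 0 (Or.inl ⟨rfl, Or.inr (by ring)⟩)
    · exact key (-1) 0 (Or.inl ⟨rfl, Or.inl (by ring)⟩)
    · exact key 0 1 (Or.inr ⟨rfl, Or.inr (by ring)⟩)
    · exact key 0 (-1) (Or.inr ⟨rfl, Or.inl (by ring)⟩)

lemma notmem_cn (hd : ∀ i, 3 ≤ d i) (u : ∀ i, ZMod (d i)) {a : ZMod (d 0)} {b : ZMod (d 1)}
    (ha : a ≠ 0) (hb : b ≠ 0) : vtx u a b ∉ closedNbhd (torus d) {u} := by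
  rw [mem_cn_iff hd]
  rintro (⟨h, -⟩ | ⟨-, h⟩ | ⟨-, h⟩ | ⟨h, -⟩ | ⟨h, -⟩) <;> first | exact ha h | exact hb h

end NB

namespace NB
variable {d : Fin 2 → ℕ}

def T (u x : ∀ i, ZMod (d i)) : Set (∀ i, ZMod (d i)) :=
  {v | v ∉ closedNbhd (torus d) {u} ∧ v ≠ x}

def Step (u x : ∀ i, ZMod (d i)) (p q : ∀ i, ZMod (d i)) : Prop :=
  p ∈ T u x ∧ q ∈ T u x ∧ (torus d).Adj p q

def Reach (u x : ∀ i, ZMod (d i)) : (∀ i, ZMod (d i)) → (∀ i, ZMod (d i)) → Prop :=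
  Relation.ReflTransGen (Step u x)

lemma step_symm (u x : ∀ i, ZMod (d i)) : Symmetric (Step u x) :=
  fun _ _ h => ⟨h.2.1, h.1, h.2.2.symm⟩

lemma reach_symm {u x p q : ∀ i, ZMod (d i)} (h : Reach u x p q) : Reach u x q p :=
  (@Relation.ReflTransGen.stdSymm _ (Step u x) ⟨step_symm u x⟩).symm _ _ h

lemma reach_trans {u x p q r : ∀ i, ZMod (d i)} (h : Reach u x p q) (h' : Reach u x q r) :
    Reach u x p r := Relation.ReflTransGen.trans h h'

lemma reach_mem {u x p q : ∀ i, ZMod (d i)} (h : Reach u x p q) (hp : p ∈ T u x) :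
    q ∈ T u x := by
  induction h with
  | refl => exact hp
  | tail _ h2 _ => exact h2.2.1

lemma reach_single {u x p q : ∀ i, ZMod (d i)} (hp : p ∈ T u x) (hq : q ∈ T u x)
    (h : (torus d).Adj p q) : Reach u x p q :=
  Relation.ReflTransGen.single ⟨hp, hq, h⟩

/-- Walk along a row, between two natural parameters, all cells in `T`. -/
lemma hwalk_le (hd : ∀ i, 3 ≤ d i) (u x : ∀ i, ZMod (d i)) (b : ZMod (d 1)) (m m' : ℕ)
    (hmm : m ≤ m')
    (hT : ∀ k, m ≤ k → k ≤ m' → vtx u (k : ZMod (d 0)) b ∈ T u x) :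
    Reach u x (vtx u (m : ZMod (d 0)) b) (vtx u (m' : ZMod (d 0)) b) := by
  induction m' , hmm using Nat.le_induction with
  | base => exact Relation.ReflTransGen.refl
  | succ n hn ih =>
    refine Relation.ReflTransGen.tail (ih fun k h1 h2 => hT k h1 (by omega)) ?_
    refine ⟨hT n hn (by omega), hT (n+1) (by omega) le_rfl, ?_⟩
    apply adjX hd
    right
    push_cast
    ring

lemma hwalk (hd : ∀ i, 3 ≤ d i) (u x : ∀ i, ZMod (d i)) (b : ZMod (d 1)) (m m' : ℕ)
    (hT : ∀ k, min m m' ≤ k → k ≤ max m m' → vtx u (k : ZMod (d 0)) b ∈ T u x) :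
    Reach u x (vtx u (m : ZMod (d 0)) b) (vtx u (m' : ZMod (d 0)) b) := by
  rcases le_total m m' with h | h
  · exact hwalk_le hd u x b m m' h fun k h1 h2 =>
      hT k (by omega) (by omega)
  · exact reach_symm (hwalk_le hd u x b m' m h fun k h1 h2 => hT k (by omega) (by omega))

lemma vwalk_le (hd : ∀ i, 3 ≤ d i) (u x : ∀ i, ZMod (d i)) (a : ZMod (d 0)) (m m' : ℕ)
    (hmm : m ≤ m')
    (hT : ∀ k, m ≤ k → k ≤ m' → vtx u a (k : ZMod (d 1)) ∈ T u x) :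
    Reach u x (vtx u a (m : ZMod (d 1))) (vtx u a (m' : ZMod (d 1))) := by
  induction m' , hmm using Nat.le_induction with
  | base => exact Relation.ReflTransGen.refl
  | succ n hn ih =>
    refine Relation.ReflTransGen.tail (ih fun k h1 h2 => hT k h1 (by omega)) ?_
    refine ⟨hT n hn (by omega), hT (n+1) (by omega) le_rfl, ?_⟩
    apply adjY hd
    right
    push_cast
    ring

lemma vwalk (hd : ∀ i, 3 ≤ d i) (u x : ∀ i, ZMod (d i)) (a : ZMod (d 0)) (m m' : ℕ)
    (hT : ∀ k, min m m' ≤ k → k ≤ max m m' → vtx u a (k : ZMod (d 1)) ∈ T u x) :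
    Reach u x (vtx u a (m : ZMod (d 1))) (vtx u a (m' : ZMod (d 1))) := by
  rcases le_total m m' with h | h
  · exact vwalk_le hd u x a m m' h fun k h1 h2 => hT k (by omega) (by omega)
  · exact reach_symm (vwalk_le hd u x a m' m h fun k h1 h2 => hT k (by omega) (by omega))

end NB

namespace NB
variable {d : Fin 2 → ℕ}

lemma zmod_val_pos {n : ℕ} [NeZero n] {a : ZMod n} (h : a ≠ 0) : 1 ≤ a.val := by
  rcases Nat.eq_zero_or_pos a.val with h0 | h0
  · exfalso; apply h; rw [← zmod_cast_val a, h0]; simp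
  · exact h0

lemma vtx_ne_x (u x : ∀ i, ZMod (d i)) {a : ZMod (d 0)} {b : ZMod (d 1)}
    (h : ¬(a = x 0 - u 0 ∧ b = x 1 - u 1)) : vtx u a b ≠ x := by
  intro he
  rw [eq_vtx u x] at he
  exact h ((vtx_eq_iff u).mp he)

lemma route1 (hd : ∀ i, 3 ≤ d i) (u x : ∀ i, ZMod (d i)) (a p : ZMod (d 0)) (b q : ZMod (d 1))
    (hx : x = vtx u p q)
    (hv : vtx u a b ∈ T u x) (ha : a ≠ 0) (hb : b ≠ 0)
    (h1 : ¬ (q = b ∧ 1 ≤ p.val ∧ p.val ≤ a.val))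
    (h2 : ¬ (p = 1 ∧ 1 ≤ q.val ∧ q.val ≤ b.val)) :
    Reach u x (vtx u a b) (vtx u 1 1) := by
  haveI : NeZero (d 0) := ⟨by have := hd 0; omega⟩
  haveI : NeZero (d 1) := ⟨by have := hd 1; omega⟩
  have hav : 1 ≤ a.val := zmod_val_pos ha
  have hbv : 1 ≤ b.val := zmod_val_pos hb
  have halt : a.val < d 0 := ZMod.val_lt a
  have hblt : b.val < d 1 := ZMod.val_lt b
  -- row cells
  have hrow : ∀ k, 1 ≤ k → k ≤ a.val → vtx u (k : ZMod (d 0)) b ∈ T u x := by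
    intro k hk1 hk2
    refine ⟨notmem_cn hd u (zmod_cast_ne_zero (hd 0) hk1 (by omega)) hb, ?_⟩
    rw [hx]
    intro he
    rcases (vtx_eq_iff u).mp he with ⟨hkp, hbq⟩
    apply h1
    refine ⟨hbq.symm, ?_, ?_⟩
    · rw [← hkp, zmod_val_cast (hd 0) (by omega)]; omega
    · rw [← hkp, zmod_val_cast (hd 0) (by omega)]; omega
  have hcol : ∀ k, 1 ≤ k → k ≤ b.val → vtx u 1 (k : ZMod (d 1)) ∈ T u x := by
    intro k hk1 hk2
    refine ⟨notmem_cn hd u (zmod_one_ne_zero (hd 0)) (zmod_cast_ne_zero (hd 1) hk1 (by omega)), ?_⟩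
    rw [hx]
    intro he
    rcases (vtx_eq_iff u).mp he with ⟨hp1, hkq⟩
    apply h2
    refine ⟨hp1.symm, ?_, ?_⟩
    · rw [← hkq, zmod_val_cast (hd 1) (by omega)]; omega
    · rw [← hkq, zmod_val_cast (hd 1) (by omega)]; omega
  have step1 : Reach u x (vtx u a b) (vtx u 1 b) := by
    have := hwalk hd u x b a.val 1 (by
      intro k hk1 hk2
      exact hrow k (by omega) (by omega))
    rwa [zmod_cast_val, Nat.cast_one] at this
  have step2 : Reach u x (vtx u 1 b) (vtx u 1 1) := by
    have := vwalk hd u x 1 b.val 1 (by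
      intro k hk1 hk2
      exact hcol k (by omega) (by omega))
    rwa [zmod_cast_val, Nat.cast_one] at this
  exact reach_trans step1 step2

lemma route2 (hd : ∀ i, 3 ≤ d i) (u x : ∀ i, ZMod (d i)) (a p : ZMod (d 0)) (b q : ZMod (d 1))
    (hx : x = vtx u p q)
    (hv : vtx u a b ∈ T u x) (ha : a ≠ 0) (hb : b ≠ 0)
    (h1 : ¬ (q = b ∧ a.val ≤ p.val))
    (h2 : ¬ (p = -1 ∧ b.val ≤ q.val)) :
    Reach u x (vtx u a b) (vtx u (-1) (-1)) := by
  haveI : NeZero (d 0) := ⟨by have := hd 0; omega⟩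
  haveI : NeZero (d 1) := ⟨by have := hd 1; omega⟩
  have hav : 1 ≤ a.val := zmod_val_pos ha
  have hbv : 1 ≤ b.val := zmod_val_pos hb
  have halt : a.val < d 0 := ZMod.val_lt a
  have hblt : b.val < d 1 := ZMod.val_lt b
  have hrow : ∀ k, a.val ≤ k → k ≤ d 0 - 1 → vtx u (k : ZMod (d 0)) b ∈ T u x := by
    intro k hk1 hk2
    refine ⟨notmem_cn hd u (zmod_cast_ne_zero (hd 0) (by omega) (by omega)) hb, ?_⟩
    rw [hx]
    intro he
    rcases (vtx_eq_iff u).mp he with ⟨hkp, hbq⟩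
    apply h1
    refine ⟨hbq.symm, ?_⟩
    rw [← hkp, zmod_val_cast (hd 0) (by omega)]; omega
  have hcol : ∀ k, b.val ≤ k → k ≤ d 1 - 1 → vtx u (-1) (k : ZMod (d 1)) ∈ T u x := by
    intro k hk1 hk2
    refine ⟨notmem_cn hd u (zmod_neg_one_ne_zero (hd 0))
      (zmod_cast_ne_zero (hd 1) (by omega) (by omega)), ?_⟩
    rw [hx]
    intro he
    rcases (vtx_eq_iff u).mp he with ⟨hp1, hkq⟩
    apply h2
    refine ⟨hp1.symm, ?_⟩
    rw [← hkq, zmod_val_cast (hd 1) (by omega)]; omega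
  have step1 : Reach u x (vtx u a b) (vtx u (-1) b) := by
    have := hwalk hd u x b a.val (d 0 - 1) (by
      intro k hk1 hk2
      exact hrow k (by omega) (by omega))
    rwa [zmod_cast_val, zmod_cast_sub_one (hd 0)] at this
  have step2 : Reach u x (vtx u (-1) b) (vtx u (-1) (-1)) := by
    have := vwalk hd u x (-1) b.val (d 1 - 1) (by
      intro k hk1 hk2
      exact hcol k (by omega) (by omega))
    rwa [zmod_cast_val, zmod_cast_sub_one (hd 1)] at this
  exact reach_trans step1 step2

end NB

namespace NB
variable {d : Fin 2 → ℕ}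

lemma reach_anchor_ne (hd : ∀ i, 3 ≤ d i) (u x : ∀ i, ZMod (d i))
    (a p : ZMod (d 0)) (b q : ZMod (d 1)) (hx : x = vtx u p q)
    (hv : vtx u a b ∈ T u x) (ha : a ≠ 0) (hb : b ≠ 0) :
    Reach u x (vtx u a b) (vtx u 1 1) ∨ Reach u x (vtx u a b) (vtx u (-1) (-1)) := by
  haveI : NeZero (d 0) := ⟨by have := hd 0; omega⟩
  haveI : NeZero (d 1) := ⟨by have := hd 1; omega⟩
  have hvx : vtx u a b ≠ x := hv.2
  have hne : ¬ (p = a ∧ q = b) := by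
    rintro ⟨rfl, rfl⟩
    exact hvx (by rw [hx])
  by_cases hc1 : (q = b ∧ 1 ≤ p.val ∧ p.val ≤ a.val) ∨ (p = 1 ∧ 1 ≤ q.val ∧ q.val ≤ b.val)
  · right
    apply route2 hd u x a p b q hx hv ha hb
    · rintro ⟨hq, hple⟩
      rcases hc1 with ⟨hq', h1p, hpa⟩ | ⟨hp, h1q, hqb⟩
      · exact hne ⟨zmod_val_injective (le_antisymm hpa hple), hq⟩
      · have hp1 : p.val = 1 := by rw [hp, zmod_val_one (hd 0)]
        have hav : 1 ≤ a.val := zmod_val_pos ha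
        have : a.val = 1 := by omega
        have ha1 : a = 1 := by
          apply zmod_val_injective; rw [this, zmod_val_one (hd 0)]
        exact hne ⟨by rw [hp, ha1], hq⟩
    · rintro ⟨hp, hqle⟩
      rcases hc1 with ⟨hq', h1p, hpa⟩ | ⟨hp', h1q, hqb⟩
      · have hpv : p.val = d 0 - 1 := by rw [hp, zmod_neg_one_val (hd 0)]
        have halt : a.val < d 0 := ZMod.val_lt a
        have : a.val = d 0 - 1 := by omega
        have ham : a = -1 := by
          apply zmod_val_injective; rw [this, zmod_neg_one_val (hd 0)]
        exact hne ⟨by rw [hp, ham], hq'⟩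
      · exact zmod_one_ne_neg_one (hd 0) (hp' ▸ hp)
  · rcases not_or.mp hc1 with ⟨h1, h2⟩
    exact Or.inl (route1 hd u x a p b q hx hv ha hb h1 h2)

lemma reach_anchor (hd : ∀ i, 3 ≤ d i) (u x v : ∀ i, ZMod (d i)) (hv : v ∈ T u x) :
    Reach u x v (vtx u 1 1) ∨ Reach u x v (vtx u (-1) (-1)) := by
  haveI : NeZero (d 0) := ⟨by have := hd 0; omega⟩
  haveI : NeZero (d 1) := ⟨by have := hd 1; omega⟩
  obtain ⟨a, b, rfl⟩ : ∃ a b, v = vtx u a b := ⟨_, _, eq_vtx u v⟩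
  have hx : x = vtx u (x 0 - u 0) (x 1 - u 1) := eq_vtx u x
  set p := x 0 - u 0 with hp
  set q := x 1 - u 1 with hq
  have hgood := hv.1
  rw [mem_cn_iff hd] at hgood
  by_cases hb : b = 0
  · -- move vertically first
    subst hb
    have ha0 : a ≠ 0 := fun h => hgood (Or.inl ⟨h, rfl⟩)
    have ha1 : a ≠ 1 := fun h => hgood (Or.inr (Or.inl ⟨h, rfl⟩))
    have ham : a ≠ -1 := fun h => hgood (Or.inr (Or.inr (Or.inl ⟨h, rfl⟩)))
    by_cases hx1 : vtx u a 1 = x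
    · have hstep : Reach u x (vtx u a 0) (vtx u a (-1)) := by
        refine reach_single hv ⟨notmem_cn hd u ha0 (zmod_neg_one_ne_zero (hd 1)), ?_⟩
          (adjY hd u a (Or.inl (by ring)))
        intro he
        rw [← hx1] at he
        rcases (vtx_eq_iff u).mp he with ⟨-, h1m⟩
        exact zmod_one_ne_neg_one (hd 1) h1m.symm
      rcases reach_anchor_ne hd u x a p (-1) q hx (reach_mem hstep hv) ha0
          (zmod_neg_one_ne_zero (hd 1)) with h | h
      · exact Or.inl (reach_trans hstep h)
      · exact Or.inr (reach_trans hstep h)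
    · have hstep : Reach u x (vtx u a 0) (vtx u a 1) := by
        refine reach_single hv ⟨notmem_cn hd u ha0 (zmod_one_ne_zero (hd 1)), hx1⟩
          (adjY hd u a (Or.inr (by ring)))
      rcases reach_anchor_ne hd u x a p 1 q hx (reach_mem hstep hv) ha0
          (zmod_one_ne_zero (hd 1)) with h | h
      · exact Or.inl (reach_trans hstep h)
      · exact Or.inr (reach_trans hstep h)
  · by_cases ha : a = 0
    · subst ha
      have hb1 : b ≠ 1 := fun h => hgood (Or.inr (Or.inr (Or.inr (Or.inl ⟨rfl, h⟩))))
      have hbm : b ≠ -1 := fun h => hgood (Or.inr (Or.inr (Or.inr (Or.inr ⟨rfl, h⟩))))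
      by_cases hp1 : p = 1
      · -- go left to (-1, b), then route2
        have hw : vtx u (-1) b ∈ T u x := by
          refine ⟨notmem_cn hd u (zmod_neg_one_ne_zero (hd 0)) hb, ?_⟩
          apply vtx_ne_x
          rintro ⟨hmp, -⟩
          rw [← hp] at hmp
          exact zmod_one_ne_neg_one (hd 0) (hp1 ▸ hmp.symm)
        have hstep : Reach u x (vtx u 0 b) (vtx u (-1) b) :=
          reach_single hv hw (adjX hd u b (Or.inl (by ring)))
        refine Or.inr (reach_trans hstep ?_)
        apply route2 hd u x (-1) p b q hx hw (zmod_neg_one_ne_zero (hd 0)) hb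
        · rintro ⟨hqb, hple⟩
          have : p.val < d 0 := ZMod.val_lt p
          have hmv : ((-1 : ZMod (d 0))).val = d 0 - 1 := zmod_neg_one_val (hd 0)
          have hpv : p.val = d 0 - 1 := by omega
          have : p = -1 := by apply zmod_val_injective; rw [hpv, hmv]
          exact zmod_one_ne_neg_one (hd 0) (hp1 ▸ this)
        · rintro ⟨hpm, -⟩
          exact zmod_one_ne_neg_one (hd 0) (hp1 ▸ hpm)
      · -- go right to (1, b), then route1
        have hw : vtx u 1 b ∈ T u x := by
          refine ⟨notmem_cn hd u (zmod_one_ne_zero (hd 0)) hb, ?_⟩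
          apply vtx_ne_x
          rintro ⟨h1p, -⟩
          rw [← hp] at h1p
          exact hp1 h1p.symm
        have hstep : Reach u x (vtx u 0 b) (vtx u 1 b) :=
          reach_single hv hw (adjX hd u b (Or.inr (by ring)))
        refine Or.inl (reach_trans hstep ?_)
        apply route1 hd u x 1 p b q hx hw (zmod_one_ne_zero (hd 0)) hb
        · rintro ⟨hqb, h1p, hple⟩
          rw [zmod_val_one (hd 0)] at hple
          have : p.val = 1 := by omega
          have : p = 1 := by apply zmod_val_injective; rw [this, zmod_val_one (hd 0)]
          exact hp1 this
        · rintro ⟨hpm, -⟩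
          exact hp1 hpm
    · exact reach_anchor_ne hd u x a p b q hx hv ha hb

end NB

namespace NB
variable {d : Fin 2 → ℕ}

lemma bridge (hd : ∀ i, 3 ≤ d i) (u x : ∀ i, ZMod (d i))
    (h1 : vtx u 1 1 ∈ T u x) (h2 : vtx u (-1) (-1) ∈ T u x) :
    Reach u x (vtx u 1 1) (vtx u (-1) (-1)) := by
  haveI : NeZero (d 0) := ⟨by have := hd 0; omega⟩
  haveI : NeZero (d 1) := ⟨by have := hd 1; omega⟩
  have hx : x = vtx u (x 0 - u 0) (x 1 - u 1) := eq_vtx u x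
  set p := x 0 - u 0 with hp
  set q := x 1 - u 1 with hq
  have hxA1 : ¬ (p = 1 ∧ q = 1) := by
    rintro ⟨hp1, hq1⟩
    exact h1.2 (by rw [hx, hp1, hq1])
  have hxA2 : ¬ (p = -1 ∧ q = -1) := by
    rintro ⟨hp1, hq1⟩
    exact h2.2 (by rw [hx, hp1, hq1])
  by_cases hP : (q = 1 ∧ p ≠ 0) ∨ (p = -1 ∧ q ≠ 0)
  · -- use route Q : column 1 down, then row -1
    have hQ1 : ¬ (p = 1 ∧ q ≠ 0) := by
      rintro ⟨hp1, hq0⟩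
      rcases hP with ⟨hq1, -⟩ | ⟨hpm, -⟩
      · exact hxA1 ⟨hp1, hq1⟩
      · exact zmod_one_ne_neg_one (hd 0) (hp1 ▸ hpm)
    have hQ2 : ¬ (q = -1 ∧ p ≠ 0) := by
      rintro ⟨hqm, hp0⟩
      rcases hP with ⟨hq1, -⟩ | ⟨hpm, hq0⟩
      · exact zmod_one_ne_neg_one (hd 1) (hq1 ▸ hqm)
      · exact hxA2 ⟨hpm, hqm⟩
    have hcol : ∀ k, 1 ≤ k → k ≤ d 1 - 1 → vtx u 1 (k : ZMod (d 1)) ∈ T u x := by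
      intro k hk1 hk2
      refine ⟨notmem_cn hd u (zmod_one_ne_zero (hd 0))
        (zmod_cast_ne_zero (hd 1) hk1 (by omega)), ?_⟩
      rw [hx]
      intro he
      rcases (vtx_eq_iff u).mp he with ⟨h1p, hkq⟩
      exact hQ1 ⟨h1p.symm, by rw [← hkq]; exact zmod_cast_ne_zero (hd 1) hk1 (by omega)⟩
    have hrow : ∀ k, 1 ≤ k → k ≤ d 0 - 1 → vtx u (k : ZMod (d 0)) (-1) ∈ T u x := by
      intro k hk1 hk2
      refine ⟨notmem_cn hd u (zmod_cast_ne_zero (hd 0) hk1 (by omega))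
        (zmod_neg_one_ne_zero (hd 1)), ?_⟩
      rw [hx]
      intro he
      rcases (vtx_eq_iff u).mp he with ⟨hkp, hmq⟩
      exact hQ2 ⟨hmq.symm, by rw [← hkp]; exact zmod_cast_ne_zero (hd 0) hk1 (by omega)⟩
    have s1 : Reach u x (vtx u 1 1) (vtx u 1 (-1)) := by
      have := vwalk hd u x 1 1 (d 1 - 1) (by
        intro k hk1 hk2
        have h30 := hd 0
        have h31 := hd 1
        exact hcol k (by omega) (by omega))
      rwa [Nat.cast_one, zmod_cast_sub_one (hd 1)] at this
    have s2 : Reach u x (vtx u 1 (-1)) (vtx u (-1) (-1)) := by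
      have := hwalk hd u x (-1) 1 (d 0 - 1) (by
        intro k hk1 hk2
        have h30 := hd 0
        have h31 := hd 1
        exact hrow k (by omega) (by omega))
      rwa [Nat.cast_one, zmod_cast_sub_one (hd 0)] at this
    exact reach_trans s1 s2
  · rcases not_or.mp hP with ⟨hP1, hP2⟩
    -- use route P : row 1 across, then column -1
    have hrow : ∀ k, 1 ≤ k → k ≤ d 0 - 1 → vtx u (k : ZMod (d 0)) 1 ∈ T u x := by
      intro k hk1 hk2
      refine ⟨notmem_cn hd u (zmod_cast_ne_zero (hd 0) hk1 (by omega))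
        (zmod_one_ne_zero (hd 1)), ?_⟩
      rw [hx]
      intro he
      rcases (vtx_eq_iff u).mp he with ⟨hkp, h1q⟩
      exact hP1 ⟨h1q.symm, by rw [← hkp]; exact zmod_cast_ne_zero (hd 0) hk1 (by omega)⟩
    have hcol : ∀ k, 1 ≤ k → k ≤ d 1 - 1 → vtx u (-1) (k : ZMod (d 1)) ∈ T u x := by
      intro k hk1 hk2
      refine ⟨notmem_cn hd u (zmod_neg_one_ne_zero (hd 0))
        (zmod_cast_ne_zero (hd 1) hk1 (by omega)), ?_⟩
      rw [hx]
      intro he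
      rcases (vtx_eq_iff u).mp he with ⟨hmp, hkq⟩
      exact hP2 ⟨hmp.symm, by rw [← hkq]; exact zmod_cast_ne_zero (hd 1) hk1 (by omega)⟩
    have s1 : Reach u x (vtx u 1 1) (vtx u (-1) 1) := by
      have := hwalk hd u x 1 1 (d 0 - 1) (by
        intro k hk1 hk2
        have h30 := hd 0
        have h31 := hd 1
        exact hrow k (by omega) (by omega))
      rwa [Nat.cast_one, zmod_cast_sub_one (hd 0)] at this
    have s2 : Reach u x (vtx u (-1) 1) (vtx u (-1) (-1)) := by
      have := vwalk hd u x (-1) 1 (d 1 - 1) (by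
        intro k hk1 hk2
        have h30 := hd 0
        have h31 := hd 1
        exact hcol k (by omega) (by omega))
      rwa [Nat.cast_one, zmod_cast_sub_one (hd 1)] at this
    exact reach_trans s1 s2

lemma master (hd : ∀ i, 3 ≤ d i) (u x : ∀ i, ZMod (d i)) :
    ∃ z ∈ T u x, ∀ v ∈ T u x, Reach u x v z := by
  have hA1g : vtx u 1 1 ∉ closedNbhd (torus d) {u} :=
    notmem_cn hd u (zmod_one_ne_zero (hd 0)) (zmod_one_ne_zero (hd 1))
  have hA2g : vtx u (-1) (-1) ∉ closedNbhd (torus d) {u} :=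
    notmem_cn hd u (zmod_neg_one_ne_zero (hd 0)) (zmod_neg_one_ne_zero (hd 1))
  have hA12 : vtx u 1 1 ≠ vtx u (-1) (-1) := by
    intro h
    exact zmod_one_ne_neg_one (hd 0) ((vtx_eq_iff u).mp h).1
  by_cases hA1 : vtx u 1 1 ∈ T u x
  · refine ⟨vtx u 1 1, hA1, fun v hv => ?_⟩
    rcases reach_anchor hd u x v hv with h | h
    · exact h
    · by_cases hA2 : vtx u (-1) (-1) ∈ T u x
      · exact reach_trans h (reach_symm (bridge hd u x hA1 hA2))
      · exfalso
        by_cases hveq : v = vtx u (-1) (-1)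
        · exact hA2 (hveq ▸ hv)
        · exact hA2 (reach_mem h hv)
  · -- then x = A1
    have hxA1 : x = vtx u 1 1 := by
      by_contra hne
      exact hA1 ⟨hA1g, fun h => hne h.symm⟩
    have hA2 : vtx u (-1) (-1) ∈ T u x := ⟨hA2g, by rw [hxA1]; exact hA12.symm⟩
    refine ⟨vtx u (-1) (-1), hA2, fun v hv => ?_⟩
    rcases reach_anchor hd u x v hv with h | h
    · exfalso
      by_cases hveq : v = vtx u 1 1
      · exact hA1 (hveq ▸ hv)
      · exact hA1 (reach_mem h hv)
    · exact h

end NB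

namespace NB
variable {d : Fin 2 → ℕ}

lemma transfer (hd : ∀ i, 3 ≤ d i) (u x : ∀ i, ZMod (d i))
    {W : Type*} (H : SimpleGraph W) (f : W → ∀ i, ZMod (d i))
    (hinj : Function.Injective f)
    (hadj : ∀ a b : W, (torus d).Adj (f a) (f b) → H.Adj a b)
    (hrange : ∀ w, f w ∈ T u x)
    (hsurj : ∀ v ∈ T u x, ∃ w, f w = v) :
    H.Connected := by
  obtain ⟨z, hz, hreach⟩ := master hd u x
  have lift : ∀ {v v' : ∀ i, ZMod (d i)}, Reach u x v v' →
      ∀ a b : W, f a = v → f b = v' → H.Reachable a b := by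
    intro v v' h
    induction h with
    | refl =>
      intro a b ha hb
      have : a = b := hinj (by rw [ha, hb])
      exact this ▸ SimpleGraph.Reachable.refl a
    | @tail c v' h1 h2 ih =>
      intro a b ha hb
      obtain ⟨wc, hwc⟩ := hsurj c h2.1
      exact (ih a wc ha hwc).trans (hadj wc b (by rw [hwc, hb]; exact h2.2.2)).reachable
  obtain ⟨w, -⟩ := hsurj z hz
  haveI : Nonempty W := ⟨w⟩
  refine ⟨fun a b => ?_⟩
  have hr : Reach u x (f a) (f b) :=
    reach_trans (hreach (f a) (hrange a)) (reach_symm (hreach (f b) (hrange b)))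
  exact lift hr a b rfl rfl

lemma u_mem_cn (u : ∀ i, ZMod (d i)) : u ∈ closedNbhd (torus d) {u} :=
  Or.inl rfl

lemma survival_connected (hd : ∀ i, 3 ≤ d i) (u : ∀ i, ZMod (d i)) :
    (survival (torus d) {u}).Connected := by
  apply transfer hd u u _ (Subtype.val) Subtype.val_injective
  · exact fun a b h => h
  · intro w
    refine ⟨w.2, ?_⟩
    intro he
    exact (he ▸ w.2) (u_mem_cn u)
  · intro v hv
    exact ⟨⟨v, hv.1⟩, rfl⟩

end NB

theorem stmt_16 {d : Fin 2 → ℕ} (hd : ∀ i, 3 ≤ d i)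
    (u : ∀ i, ZMod (d i)) :
    (survival (torus d) {u}).Connected ∧
    2 ≤ vConnectivity (survival (torus d) {u}) := by
  haveI i0 : NeZero (d 0) := ⟨by have := hd 0; omega⟩
  haveI i1 : NeZero (d 1) := ⟨by have := hd 1; omega⟩
  haveI iall : ∀ i : Fin 2, NeZero (d i) := by
    intro i
    fin_cases i
    · exact i0
    · exact i1
  haveI : Finite (∀ i, ZMod (d i)) := by infer_instance
  have hA1 : NB.vtx u 1 1 ∈ (closedNbhd (torus d) {u})ᶜ :=
    NB.notmem_cn hd u (NB.zmod_one_ne_zero (hd 0)) (NB.zmod_one_ne_zero (hd 1))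
  have hA2 : NB.vtx u (-1) (-1) ∈ (closedNbhd (torus d) {u})ᶜ :=
    NB.notmem_cn hd u (NB.zmod_neg_one_ne_zero (hd 0)) (NB.zmod_neg_one_ne_zero (hd 1))
  have hA3 : NB.vtx u 1 (-1) ∈ (closedNbhd (torus d) {u})ᶜ :=
    NB.notmem_cn hd u (NB.zmod_one_ne_zero (hd 0)) (NB.zmod_neg_one_ne_zero (hd 1))
  set z1 : ↥(closedNbhd (torus d) {u})ᶜ := ⟨_, hA1⟩ with hz1def
  set z2 : ↥(closedNbhd (torus d) {u})ᶜ := ⟨_, hA2⟩ with hz2def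
  set z3 : ↥(closedNbhd (torus d) {u})ᶜ := ⟨_, hA3⟩ with hz3def
  have h12 : z1 ≠ z2 := by
    intro h
    have := congrArg Subtype.val h
    exact NB.zmod_one_ne_neg_one (hd 0) ((NB.vtx_eq_iff u).mp this).1
  have h13 : z1 ≠ z3 := by
    intro h
    have := congrArg Subtype.val h
    exact NB.zmod_one_ne_neg_one (hd 1) ((NB.vtx_eq_iff u).mp this).2
  have h23 : z2 ≠ z3 := by
    intro h
    have := congrArg Subtype.val h
    exact (NB.zmod_one_ne_neg_one (hd 0) ((NB.vtx_eq_iff u).mp this).1.symm)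
  -- connectivity of the survival graph with one extra vertex removed (or none)
  have key : ∀ x : ∀ i, ZMod (d i), ∀ U : Set ↥(closedNbhd (torus d) {u})ᶜ,
      (∀ w : ↥Uᶜ, (w : ↥(closedNbhd (torus d) {u})ᶜ).val ∈ NB.T u x) →
      (∀ v ∈ NB.T u x, ∃ w : ↥Uᶜ, (w : ↥(closedNbhd (torus d) {u})ᶜ).val = v) →
      ((survival (torus d) {u}).induce Uᶜ).Connected := by
    intro x U hrange hsurj
    refine NB.transfer hd u x ((survival (torus d) {u}).induce Uᶜ)
      (fun w => w.1.1) ?_ ?_ hrange hsurj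
    · intro a b h
      exact Subtype.ext (Subtype.ext h)
    · exact fun a b h => h
  refine ⟨NB.survival_connected hd u, ?_⟩
  apply le_csInf
  · refine ⟨({z1}ᶜ : Set ↥(closedNbhd (torus d) {u})ᶜ).ncard,
      {z1}ᶜ, Set.toFinite _, rfl, Or.inr ⟨z1, by rw [compl_compl]⟩⟩
  · rintro k ⟨U, hUf, rfl, hprop⟩
    by_contra hlt
    push_neg at hlt
    have hcase : U.ncard = 0 ∨ U.ncard = 1 := by omega
    rcases hcase with h0 | h1
    · obtain rfl : U = ∅ := (Set.ncard_eq_zero hUf).mp h0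
      rcases hprop with hnc | ⟨v, hveq⟩
      · apply hnc
        apply key u
        · intro w
          refine ⟨w.1.2, ?_⟩
          intro he
          exact (he ▸ w.1.2) (NB.u_mem_cn u)
        · intro v hv
          exact ⟨⟨⟨v, hv.1⟩, by simp⟩, rfl⟩
      · have e1 : z1 ∈ (∅ : Set ↥(closedNbhd (torus d) {u})ᶜ)ᶜ := by simp
        have e2 : z2 ∈ (∅ : Set ↥(closedNbhd (torus d) {u})ᶜ)ᶜ := by simp
        rw [hveq] at e1 e2
        exact h12 (e1.trans e2.symm)
    · obtain ⟨x₀, rfl⟩ := Set.ncard_eq_one.mp h1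
      rcases hprop with hnc | ⟨v, hveq⟩
      · apply hnc
        apply key (x₀ : ∀ i, ZMod (d i))
        · intro w
          refine ⟨w.1.2, ?_⟩
          intro he
          apply (Set.mem_compl_iff _ _).mp w.2
          rw [Set.mem_singleton_iff]
          exact Subtype.ext he
        · intro v hv
          refine ⟨⟨⟨v, hv.1⟩, ?_⟩, rfl⟩
          rw [Set.mem_compl_iff, Set.mem_singleton_iff]
          intro he
          exact hv.2 (congrArg Subtype.val he)
      · have two : ∃ w w' : ↥(closedNbhd (torus d) {u})ᶜ,
            w ≠ w' ∧ w ≠ x₀ ∧ w' ≠ x₀ := by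
          by_cases hz1 : z1 = x₀
          · exact ⟨z2, z3, h23, fun h => h12 (hz1.trans h.symm),
              fun h => h13 (hz1.trans h.symm)⟩
          · by_cases hz2 : z2 = x₀
            · exact ⟨z1, z3, h13, hz1, fun h => h23 (hz2.trans h.symm)⟩
            · exact ⟨z1, z2, h12, hz1, hz2⟩
        obtain ⟨w, w', hww, hwx, hwx'⟩ := two
        have e1 : w ∈ ({x₀}ᶜ : Set ↥(closedNbhd (torus d) {u})ᶜ) := hwx
        have e2 : w' ∈ ({x₀}ᶜ : Set ↥(closedNbhd (torus d) {u})ᶜ) := hwx'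
        rw [hveq, Set.mem_singleton_iff] at e1 e2
        exact hww (e1.trans e2.symm)
end
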